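/- arXiv:2309.03500 — 6 statements merged into one kernel-verified Lean document; each statement's English description precedes it below -/
import Mathlib

section
/- Let a = (a_l)_{l∈ℤ} be a finitely supported real mask with ∑_{j∈ℤ} a_{2j} = ∑_{j∈ℤ} a_{2j+1} = 1, and let q = (q_j)_{j∈ℤ} be the (unique) finitely supported sequence whose Laurent polynomial satisfies ∑_j a_j z^{−j} = (1+z) ∑_j q_j z^{−j}. If max( ∑_{j∈ℤ} |q_{2j}| , ∑_{j∈ℤ} |q_{2j−1}| ) < 1, then the subdivision scheme S_a is uniformly convergent. -/
/-- The binary subdivision operator with mask `a`: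
`(S_a f) m = ∑_l a (2l - m) * f l`, i.e. `(S_a f)_{2j+i} = ∑_l a_{2l-i} f_{j+l}`. -/
noncomputable def subOp (a : ℤ → ℝ) (f : ℤ → ℝ) : ℤ → ℝ :=
  fun m => ∑ᶠ l : ℤ, a (2 * l - m) * f l

/-- A bounded real sequence indexed by `ℤ`. -/
def IsBoundedSeq (f : ℤ → ℝ) : Prop := ∃ M : ℝ, ∀ j : ℤ, |f j| ≤ M

/-- `S^k f⁰` converges uniformly to the continuous function `F`, in the sense
`lim_{k→∞} sup_{j∈ℤ} |(S^k f⁰)_j − F(2^{−k} j)| = 0`. -/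
def ConvergesUniformlyTo (S : (ℤ → ℝ) → (ℤ → ℝ)) (f : ℤ → ℝ) (F : ℝ → ℝ) : Prop :=
  ∀ ε : ℝ, 0 < ε → ∃ K : ℕ, ∀ k : ℕ, K ≤ k → ∀ j : ℤ,
    |(S^[k] f) j - F ((j : ℝ) / 2 ^ k)| ≤ ε

/-- A subdivision scheme is uniformly convergent if every bounded initial sequence
has a continuous limit function. -/
def UnifConvergent (S : (ℤ → ℝ) → (ℤ → ℝ)) : Prop :=
  ∀ f : ℤ → ℝ, IsBoundedSeq f → ∃ F : ℝ → ℝ, Continuous F ∧ ConvergesUniformlyTo S f F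

/-!
Since `a(z) = (1 + z) q(z)`, differencing turns `S_a` into `S_q`: `Δ (S_a g) = S_q (Δ g)` up to a
shift of index, so `‖Δ S_a^k f‖_∞ ≤ μ^k ‖Δ f‖_∞` with `μ = max(∑|q_{2j}|, ∑|q_{2j-1}|) < 1`, the
norm of `S_q` on `ℓ^∞`. Because `S_a` reproduces constants, `(S_a g)_i` lies within `O(‖Δ g‖_∞)`
of `g_{⌊i/2⌋}`, so the piecewise-linear interpolants `F_k` of `S_a^k f` on the grids `2^{-k} ℤ`
satisfy `‖F_{k+1} - F_k‖_∞ = O(μ^k)`. These continuous functions converge uniformly at a geometric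
rate, and their limit is the limit function of the scheme.
-/

open Function Set Filter Topology
open scoped fwdDiff

lemma two_mul_sub_injective (i : ℤ) : Injective fun l : ℤ => 2 * l - i :=
  fun x y h => by simp only at h; omega

lemma Function.HasFiniteSupport.comp_two_mul_sub {M : Type*} [Zero M] {b : ℤ → M}
    (hb : HasFiniteSupport b) (i : ℤ) : HasFiniteSupport fun l : ℤ => b (2 * l - i) :=
  hb.fun_comp_of_injective (two_mul_sub_injective i)

lemma finsum_comp_two_mul_sub_of_even_sub {M : Type*} [AddCommMonoid M] (φ : ℤ → M) {i i' : ℤ}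
    (h : Even (i - i')) : ∑ᶠ l, φ (2 * l - i) = ∑ᶠ l, φ (2 * l - i') := by
  obtain ⟨t, ht⟩ := h
  calc ∑ᶠ l, φ (2 * l - i) = ∑ᶠ l, φ (2 * (l - t) - i') :=
        finsum_congr fun l => by congr 1; omega
    _ = ∑ᶠ l, φ (2 * l - i') := finsum_comp_equiv (Equiv.subRight t) (f := fun l => φ (2 * l - i'))

lemma abs_finsum_le_finsum {α : Type*} {x y : α → ℝ} (hy : HasFiniteSupport y)
    (h : ∀ l, |x l| ≤ y l) : |∑ᶠ l, x l| ≤ ∑ᶠ l, y l := by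
  have hx : HasFiniteSupport x :=
    hy.subset fun l hl hyl => hl (abs_nonpos_iff.1 (hyl ▸ h l))
  rw [abs_le, ← finsum_neg_distrib]
  exact ⟨finsum_le_finsum' hy.neg hx fun l => (abs_le.1 (h l)).1,
    finsum_le_finsum' hx hy fun l => (abs_le.1 (h l)).2⟩

lemma finsum_comp_le_finsum {α β : Type*} {e : β → α} (he : Injective e) {ψ : α → ℝ}
    (hψ : HasFiniteSupport ψ) (hψ0 : 0 ≤ ψ) : ∑ᶠ l, ψ (e l) ≤ ∑ᶠ n, ψ n := by
  rw [← finsum_mem_range he, finsum_mem_def]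
  exact finsum_le_finsum' (hψ.subset (by rw [support_indicator]; exact inter_subset_right)) hψ
    (indicator_le_self' fun x _ => hψ0 x)

lemma abs_sub_le_of_abs_fwdDiff_le {g : ℤ → ℝ} {d : ℝ} (hg : ∀ j, |Δ_[1] g j| ≤ d) (i j : ℤ) :
    |g i - g j| ≤ |(i : ℝ) - j| * d := by
  wlog hji : j ≤ i generalizing i j
  · rw [abs_sub_comm, abs_sub_comm (i : ℝ)]
    exact this j i (by omega)
  obtain ⟨n, rfl⟩ := Int.le.dest hji
  suffices |g (j + n) - g j| ≤ n * d by simpa using this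
  clear hji
  induction n with
  | zero => simp
  | succ n ih =>
    calc |g (j + ↑(n + 1)) - g j| ≤ |g (j + n + 1) - g (j + n)| + |g (j + n) - g j| := by
          rw [Nat.cast_succ, ← add_assoc]; exact abs_sub_le _ _ _
      _ ≤ d + n * d := add_le_add (hg (j + n)) ih
      _ = ↑(n + 1) * d := by push_cast; ring

section Subdivision

variable {a q : ℤ → ℝ}

lemma subOp_add_two (q g : ℤ → ℝ) (n : ℤ) :
    subOp q g (n + 2) = subOp q (fun l => g (l + 1)) n := by
  rw [subOp, ← finsum_comp_equiv (Equiv.addRight 1)]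
  exact finsum_congr fun l => by simp only [Equiv.coe_addRight]; ring_nf

lemma subOp_sub (hq : HasFiniteSupport q) (g h : ℤ → ℝ) (n : ℤ) :
    subOp q g n - subOp q h n = subOp q (g - h) n := by
  simp only [subOp, Pi.sub_apply, mul_sub]
  exact (finsum_sub_distrib ((hq.comp_two_mul_sub n).fun_mul_left g)
    ((hq.comp_two_mul_sub n).fun_mul_left h)).symm

lemma subOp_eq_add_subOp_sub_one (hq : HasFiniteSupport q) (hfac : ∀ j, a j = q j + q (j + 1))
    (g : ℤ → ℝ) (n : ℤ) : subOp a g n = subOp q g n + subOp q g (n - 1) := by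
  simp only [subOp, hfac, add_mul]
  rw [← finsum_add_distrib ((hq.comp_two_mul_sub n).fun_mul_left g)
    ((hq.comp_two_mul_sub (n - 1)).fun_mul_left g)]
  exact finsum_congr fun l => by ring_nf

lemma fwdDiff_subOp (hq : HasFiniteSupport q) (hfac : ∀ j, a j = q j + q (j + 1))
    (g : ℤ → ℝ) (m : ℤ) : Δ_[1] (subOp a g) m = subOp q (Δ_[1] g) (m - 1) := by
  have h := subOp_add_two q g (m - 1)
  rw [show m - 1 + 2 = m + 1 by ring] at h
  calc Δ_[1] (subOp a g) m = subOp q g (m + 1) - subOp q g (m - 1) := by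
        rw [fwdDiff, subOp_eq_add_subOp_sub_one hq hfac, subOp_eq_add_subOp_sub_one hq hfac,
          add_sub_cancel_right]
        ring
    _ = subOp q (Δ_[1] g) (m - 1) := by rw [h, subOp_sub hq]; rfl

/-- The operator norm of `subOp q` on `ℓ^∞(ℤ)`. -/
noncomputable def maskNorm (q : ℤ → ℝ) : ℝ :=
  max (∑ᶠ j : ℤ, |q (2 * j)|) (∑ᶠ j : ℤ, |q (2 * j - 1)|)

lemma maskNorm_nonneg (q : ℤ → ℝ) : 0 ≤ maskNorm q :=
  (finsum_nonneg fun _ => abs_nonneg _).trans (le_max_left _ _)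

lemma finsum_abs_comp_two_mul_sub_le_maskNorm (q : ℤ → ℝ) (n : ℤ) :
    ∑ᶠ l, |q (2 * l - n)| ≤ maskNorm q := by
  rcases Int.even_or_odd n with hn | hn
  · rw [finsum_comp_two_mul_sub_of_even_sub (fun k => |q k|) (i' := 0) (by simpa using hn)]
    simp only [sub_zero]
    exact le_max_left _ _
  · rw [finsum_comp_two_mul_sub_of_even_sub (fun k => |q k|) (hn.sub_odd odd_one)]
    exact le_max_right _ _

lemma abs_subOp_le (hq : HasFiniteSupport q) {h : ℤ → ℝ} {d : ℝ} (hh : ∀ l, |h l| ≤ d) (n : ℤ) :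
    |subOp q h n| ≤ (∑ᶠ l, |q (2 * l - n)|) * d := by
  rw [finsum_mul]
  refine abs_finsum_le_finsum ((hq.comp_two_mul_sub n).fun_comp abs_zero |>.fun_mul_left _)
    fun l => ?_
  rw [abs_mul]
  exact mul_le_mul_of_nonneg_left (hh l) (abs_nonneg _)

lemma abs_fwdDiff_iterate_subOp_le (hq : HasFiniteSupport q) (hfac : ∀ j, a j = q j + q (j + 1))
    {f : ℤ → ℝ} {d : ℝ} (hf : ∀ j, |Δ_[1] f j| ≤ d) (k : ℕ) (j : ℤ) :
    |Δ_[1] ((subOp a)^[k] f) j| ≤ maskNorm q ^ k * d := by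
  induction k generalizing j with
  | zero => simpa using hf j
  | succ k ih =>
    rw [iterate_succ_apply', fwdDiff_subOp hq hfac, pow_succ', mul_assoc]
    exact (abs_subOp_le hq ih _).trans <| mul_le_mul_of_nonneg_right
      (finsum_abs_comp_two_mul_sub_le_maskNorm q _) ((abs_nonneg _).trans (ih 0))

lemma finsum_comp_two_mul_sub_eq_one (hsum0 : ∑ᶠ j : ℤ, a (2 * j) = 1)
    (hsum1 : ∑ᶠ j : ℤ, a (2 * j + 1) = 1) (i : ℤ) : ∑ᶠ l, a (2 * l - i) = 1 := by
  rcases Int.even_or_odd i with hi | hi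
  · rw [finsum_comp_two_mul_sub_of_even_sub a (i' := 0) (by simpa using hi)]
    simpa using hsum0
  · rw [finsum_comp_two_mul_sub_of_even_sub a (i' := -1) (by simpa using hi.add_one)]
    simpa using hsum1

noncomputable def maskMoment (a : ℤ → ℝ) : ℝ := ∑ᶠ n : ℤ, |a n| * (|(n : ℝ)| + 1)

lemma subOp_sub_eq_finsum (ha : HasFiniteSupport a) {i : ℤ} (hsum : ∑ᶠ l, a (2 * l - i) = 1)
    (g : ℤ → ℝ) (j : ℤ) : subOp a g i - g j = ∑ᶠ l, a (2 * l - i) * (g l - g j) := by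
  simp only [mul_sub]
  rw [finsum_sub_distrib ((ha.comp_two_mul_sub i).fun_mul_left g)
    ((ha.comp_two_mul_sub i).fun_mul_left _), ← finsum_mul, hsum, one_mul]
  rfl

lemma abs_subOp_sub_le (ha : HasFiniteSupport a) (hsum : ∀ i, ∑ᶠ l, a (2 * l - i) = 1)
    {g : ℤ → ℝ} {d : ℝ} (hg : ∀ j, |Δ_[1] g j| ≤ d) {i j : ℤ} (hij : 2 * j ≤ i)
    (hji : i ≤ 2 * j + 2) : |subOp a g i - g j| ≤ maskMoment a * d := by
  set ψ : ℤ → ℝ := fun n => |a n| * (|(n : ℝ)| + 1)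
  have hψ : HasFiniteSupport ψ := (ha.fun_comp abs_zero).fun_mul_left _
  have hd : 0 ≤ d := (abs_nonneg _).trans (hg 0)
  have hij' : (2 * j : ℝ) ≤ i := by exact_mod_cast hij
  have hji' : (i : ℝ) ≤ 2 * j + 2 := by exact_mod_cast hji
  rw [subOp_sub_eq_finsum ha (hsum i)]
  calc |∑ᶠ l, a (2 * l - i) * (g l - g j)| ≤ ∑ᶠ l, ψ (2 * l - i) * d := by
        refine abs_finsum_le_finsum ((hψ.comp_two_mul_sub i).fun_mul_left _) fun l => ?_
        rw [abs_mul, mul_assoc]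
        gcongr
        refine (abs_sub_le_of_abs_fwdDiff_le hg l j).trans (mul_le_mul_of_nonneg_right ?_ hd)
        -- `|l - j| ≤ |2l - i| / 2 + 1` because `0 ≤ i - 2j ≤ 2`
        push_cast
        rw [abs_le]
        constructor <;> linarith [le_abs_self (2 * l - i : ℝ), neg_abs_le (2 * l - i : ℝ)]
    _ = (∑ᶠ l, ψ (2 * l - i)) * d := (finsum_mul _ _).symm
    _ ≤ maskMoment a * d := mul_le_mul_of_nonneg_right
        (finsum_comp_le_finsum (two_mul_sub_injective i) hψ fun n => by positivity) hd

end Subdivision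

noncomputable def linInterp (g : ℤ → ℝ) (x : ℝ) : ℝ := g ⌊x⌋ + Int.fract x * Δ_[1] g ⌊x⌋

lemma linInterp_intCast (g : ℤ → ℝ) (j : ℤ) : linInterp g j = g j := by
  simp [linInterp]

lemma linInterp_eq_of_mem_Icc (g : ℤ → ℝ) {n : ℤ} {x : ℝ} (hx : x ∈ Icc (n : ℝ) (n + 1)) :
    linInterp g x = g n + (x - n) * Δ_[1] g n := by
  rcases hx.2.eq_or_lt with rfl | hlt
  · have h := linInterp_intCast g (n + 1)
    push_cast at h
    simp [h, fwdDiff]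
  · rw [linInterp, Int.fract, Int.floor_eq_iff.2 ⟨hx.1, hlt⟩]

lemma continuous_linInterp (g : ℤ → ℝ) : Continuous (linInterp g) := by
  have hpiece (n : ℤ) : ContinuousOn (linInterp g) (Icc n (n + 1)) :=
    (by fun_prop : Continuous fun x : ℝ => g n + (x - n) * Δ_[1] g n).continuousOn.congr
      fun x hx => linInterp_eq_of_mem_Icc g hx
  refine continuous_iff_continuousAt.2 fun x => continuousAt_iff_continuous_left_right.2 ⟨?_, ?_⟩
  · have hx : x ∈ Ioc ((⌈x⌉ - 1 : ℤ) : ℝ) ((⌈x⌉ - 1 : ℤ) + 1) := by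
      push_cast
      exact ⟨by linarith [Int.ceil_lt_add_one x], by linarith [Int.le_ceil x]⟩
    exact (hpiece _ x (Ioc_subset_Icc_self hx)).mono_of_mem_nhdsWithin (Icc_mem_nhdsLE_of_mem hx)
  · have hx : x ∈ Ico (⌊x⌋ : ℝ) (⌊x⌋ + 1) := ⟨Int.floor_le x, Int.lt_floor_add_one x⟩
    exact (hpiece _ x (Ico_subset_Icc_self hx)).mono_of_mem_nhdsWithin (Icc_mem_nhdsGE_of_mem hx)

lemma abs_linInterp_sub_le (g : ℤ → ℝ) {x c B : ℝ} (h₀ : |g ⌊x⌋ - c| ≤ B)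
    (h₁ : |g (⌊x⌋ + 1) - c| ≤ B) : |linInterp g x - c| ≤ B := by
  have ht₀ := Int.fract_nonneg x
  have ht₁ := Int.fract_lt_one x
  have hcomb : linInterp g x - c
      = (1 - Int.fract x) * (g ⌊x⌋ - c) + Int.fract x * (g (⌊x⌋ + 1) - c) := by
    simp only [linInterp, fwdDiff]
    ring
  rw [abs_le] at h₀ h₁
  rw [hcomb, abs_le]
  constructor <;> nlinarith

lemma abs_linInterp_sub_floor_le (g : ℤ → ℝ) (x : ℝ) : |linInterp g x - g ⌊x⌋| ≤ |Δ_[1] g ⌊x⌋| := by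
  rw [linInterp, add_sub_cancel_left, abs_mul, abs_of_nonneg (Int.fract_nonneg x)]
  exact mul_le_of_le_one_left (abs_nonneg _) (Int.fract_lt_one x).le

lemma abs_linInterp_subOp_sub_le {a : ℤ → ℝ} (ha : HasFiniteSupport a)
    (hsum : ∀ i, ∑ᶠ l, a (2 * l - i) = 1) {g : ℤ → ℝ} {d : ℝ} (hg : ∀ j, |Δ_[1] g j| ≤ d)
    (y : ℝ) : |linInterp (subOp a g) (2 * y) - linInterp g y| ≤ (maskMoment a + 1) * d := by
  have hlo : 2 * ⌊y⌋ ≤ ⌊2 * y⌋ := Int.le_floor.2 (by push_cast; linarith [Int.floor_le y])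
  have hhi : ⌊2 * y⌋ < 2 * ⌊y⌋ + 2 :=
    Int.floor_lt.2 (by push_cast; linarith [Int.lt_floor_add_one y])
  have hnode (i : ℤ) (h₀ : 2 * ⌊y⌋ ≤ i) (h₂ : i ≤ 2 * ⌊y⌋ + 2) :
      |subOp a g i - linInterp g y| ≤ (maskMoment a + 1) * d := by
    calc |subOp a g i - linInterp g y|
        ≤ |subOp a g i - g ⌊y⌋| + |g ⌊y⌋ - linInterp g y| := abs_sub_le _ _ _
      _ ≤ maskMoment a * d + d := by
          rw [abs_sub_comm (g _)]
          exact add_le_add (abs_subOp_sub_le ha hsum hg h₀ h₂)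
            ((abs_linInterp_sub_floor_le g y).trans (hg _))
      _ = (maskMoment a + 1) * d := by ring
  exact abs_linInterp_sub_le _ (hnode _ hlo (by omega)) (hnode _ (by omega) (by omega))

lemma tendsto_mul_pow_atTop_nhds_zero {c r : ℝ} (hr₀ : 0 ≤ r) (hr : r < 1) :
    Tendsto (fun k : ℕ => c * r ^ k) atTop (𝓝 0) := by
  simpa using (tendsto_pow_atTop_nhds_zero_of_lt_one hr₀ hr).const_mul c

lemma exists_continuous_dist_le_of_dist_le_geometric {X Y : Type*} [TopologicalSpace X]
    [MetricSpace Y] [CompleteSpace Y] {F : ℕ → X → Y} {c r : ℝ} (hr₀ : 0 ≤ r) (hr : r < 1)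
    (hF : ∀ k, Continuous (F k)) (hstep : ∀ k x, dist (F k x) (F (k + 1) x) ≤ c * r ^ k) :
    ∃ G : X → Y, Continuous G ∧ ∀ k x, dist (F k x) (G x) ≤ c / (1 - r) * r ^ k := by
  choose G hG using fun x =>
    cauchySeq_tendsto_of_complete (cauchySeq_of_le_geometric r c hr (hstep · x))
  have hdist (k : ℕ) (x : X) : dist (F k x) (G x) ≤ c / (1 - r) * r ^ k := by
    rw [div_mul_eq_mul_div]
    exact dist_le_of_le_geometric_of_tendsto r c hr (hstep · x) (hG x) k
  have hunif : TendstoUniformly F G atTop := by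
    refine Metric.tendstoUniformly_iff.2 fun ε hε => ?_
    filter_upwards [(tendsto_mul_pow_atTop_nhds_zero hr₀ hr).eventually_lt_const hε] with k hk x
    exact (dist_comm _ _).trans_le (hdist k x) |>.trans_lt hk
  exact ⟨G, hunif.continuous (Frequently.of_forall hF), hdist⟩

lemma convergesUniformlyTo_of_le_geometric {S : (ℤ → ℝ) → (ℤ → ℝ)} {f : ℤ → ℝ} {F : ℝ → ℝ}
    {c r : ℝ} (hr₀ : 0 ≤ r) (hr : r < 1)
    (h : ∀ (k : ℕ) (j : ℤ), |(S^[k] f) j - F ((j : ℝ) / 2 ^ k)| ≤ c * r ^ k) :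
    ConvergesUniformlyTo S f F := by
  intro ε hε
  obtain ⟨K, hK⟩ := eventually_atTop.1
    ((tendsto_mul_pow_atTop_nhds_zero (c := c) hr₀ hr).eventually_le_const hε)
  exact ⟨K, fun k hk j => (h k j).trans (hK k hk)⟩

/-- if `a` is a finitely supported mask reproducing constants
(`∑ a_{2j} = ∑ a_{2j+1} = 1`), `q` is the finitely supported difference mask
(`a(z) = (1+z) q(z)`, i.e. `a j = q j + q (j+1)`), and
`max(∑ |q_{2j}|, ∑ |q_{2j−1}|) < 1`, then `S_a` is uniformly convergent. -/
theorem stmt2 (a q : ℤ → ℝ) (ha : (Function.support a).Finite)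
    (hq : (Function.support q).Finite)
    (hsum0 : (∑ᶠ j : ℤ, a (2 * j)) = 1) (hsum1 : (∑ᶠ j : ℤ, a (2 * j + 1)) = 1)
    (hfac : ∀ j : ℤ, a j = q j + q (j + 1))
    (hnorm : max (∑ᶠ j : ℤ, |q (2 * j)|) (∑ᶠ j : ℤ, |q (2 * j - 1)|) < 1) :
    UnifConvergent (subOp a) := by
  rintro f ⟨M, hM⟩
  have hdiff : ∀ k j, |Δ_[1] ((subOp a)^[k] f) j| ≤ maskNorm q ^ k * (2 * M) :=
    abs_fwdDiff_iterate_subOp_le hq hfac fun j =>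
      (abs_sub _ _).trans (by linarith [hM j, hM (j + 1)])
  let F (k : ℕ) (x : ℝ) : ℝ := linInterp ((subOp a)^[k] f) (2 ^ k * x)
  have hstep (k : ℕ) (x : ℝ) :
      dist (F k x) (F (k + 1) x) ≤ (maskMoment a + 1) * (2 * M) * maskNorm q ^ k := by
    rw [dist_comm, Real.dist_eq, mul_assoc, mul_comm (2 * M)]
    simpa only [F, iterate_succ_apply', pow_succ', mul_assoc] using
      abs_linInterp_subOp_sub_le ha (finsum_comp_two_mul_sub_eq_one hsum0 hsum1) (hdiff k)
        (2 ^ k * x)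
  obtain ⟨G, hGc, hG⟩ := exists_continuous_dist_le_of_dist_le_geometric (F := F)
    (maskNorm_nonneg q) hnorm (fun k => (continuous_linInterp _).comp (continuous_const_mul _))
    hstep
  have hgrid (k : ℕ) (j : ℤ) : |(subOp a)^[k] f j - G (j / 2 ^ k)|
      ≤ (maskMoment a + 1) * (2 * M) / (1 - maskNorm q) * maskNorm q ^ k := by
    simpa [F, mul_div_cancel₀, linInterp_intCast, Real.dist_eq] using hG k (j / 2 ^ k)
  exact ⟨G, hGc, convergesUniformlyTo_of_le_geometric (maskNorm_nonneg q) hnorm hgrid⟩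
end

section
/- Let n ≥ 1 and 0 ≤ d with d+1 ≤ 2n. Take the m = 2n nodes x_l = 2l−1 indexed by l = 1−n,…,n, and weights v_l > 0 indexed by l = 1−n,…,n satisfying the symmetry v_l = v_{1−l} for all l. Then the WLPR mask a = W X (XᵀWX)⁻¹ e₁ (indexed by l = 1−n,…,n) is symmetric: a_l = a_{1−l} for all l = 1−n,…,n. -/
/-!
The reflection `l ↦ 1 - l` of the index set maps the node `2l - 1` to its negative and, by
hypothesis, fixes the weights. The WLPR mask is equivariant under relabelling the nodes and
invariant under scaling them by a unit `c` (the design matrix becomes `X D` with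
`D = diag(c^t)`, and `D⁻¹ e₁ = e₁`), so the mask is invariant under the reflection.
Neither step needs `XᵀWX` to be invertible: `(A * B)⁻¹ = B⁻¹ * A⁻¹` holds for Mathlib's
matrix inverse unconditionally.
-/

open Matrix

/-- The WLPR mask for the `2n` odd nodes `x_l = 2l − 1`, `l = 1−n,…,n`, with
weights `v_l`: `a = W X (XᵀWX)⁻¹ e₁`, where `X_{l,t} = (2l−1)^t`, `t = 0,…,d`. -/
noncomputable def oddMask (n d : ℕ) (v : ℤ → ℝ) :
    {l : ℤ // l ∈ Finset.Icc (1 - (n : ℤ)) (n : ℤ)} → ℝ :=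
  let X : Matrix {l : ℤ // l ∈ Finset.Icc (1 - (n : ℤ)) (n : ℤ)} (Fin (d + 1)) ℝ :=
    Matrix.of fun l t => ((2 * (l : ℤ) - 1 : ℤ) : ℝ) ^ (t : ℕ)
  let W := Matrix.diagonal (fun l : {l : ℤ // l ∈ Finset.Icc (1 - (n : ℤ)) (n : ℤ)} =>
    v (l : ℤ))
  (W * X * (Xᵀ * W * X)⁻¹) *ᵥ Pi.single 0 1

namespace WLPR

variable {ι κ R : Type*} [CommRing R]

def design (x : ι → R) (d : ℕ) : Matrix ι (Fin (d + 1)) R :=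
  of fun l t => x l ^ (t : ℕ)

theorem design_smul (x : ι → R) (d : ℕ) (c : R) :
    design (c • x) d = design x d * diagonal (fun t : Fin (d + 1) => c ^ (t : ℕ)) := by
  ext l t
  simp [design, mul_pow, mul_comm]

variable [Fintype ι] [DecidableEq ι] [Fintype κ] [DecidableEq κ]

noncomputable def mask (x w : ι → R) (d : ℕ) : ι → R :=
  (diagonal w * design x d * ((design x d)ᵀ * diagonal w * design x d)⁻¹) *ᵥ Pi.single 0 1

theorem mask_comp_equiv (x w : ι → R) (d : ℕ) (e : κ ≃ ι) :
    mask (x ∘ e) (w ∘ e) d = mask x w d ∘ e := by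
  set G := (design x d)ᵀ * diagonal w * design x d
  have hWX : diagonal (w ∘ e) * design (x ∘ e) d = (diagonal w * design x d).submatrix e id := by
    rw [← submatrix_diagonal_equiv, submatrix_mul _ _ _ e _ e.bijective]; rfl
  have hG : (design (x ∘ e) d)ᵀ * diagonal (w ∘ e) * design (x ∘ e) d = G := by
    rw [Matrix.mul_assoc, hWX, show design (x ∘ e) d = (design x d).submatrix e id from rfl,
      transpose_submatrix, submatrix_mul_equiv, submatrix_id_id, ← Matrix.mul_assoc]
  unfold mask
  rw [hWX, hG, ← submatrix_id_id G⁻¹, ← submatrix_mul _ _ _ _ _ Function.bijective_id,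
    ← Equiv.coe_refl, submatrix_mulVec_equiv]
  rfl

theorem mask_smul (x w : ι → R) (d : ℕ) {c : R} (hc : IsUnit c) :
    mask (c • x) w d = mask x w d := by
  unfold mask
  rw [design_smul]
  set D : Matrix (Fin (d + 1)) (Fin (d + 1)) R := diagonal fun t => c ^ (t : ℕ)
  set G := (design x d)ᵀ * diagonal w * design x d
  have hD : IsUnit D.det := by
    rw [det_diagonal]
    exact IsUnit.prod_univ_iff.2 fun t => hc.pow _
  have hDe : D *ᵥ Pi.single 0 1 = Pi.single 0 1 := by
    rw [mulVec_single_one]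
    ext t
    by_cases ht : t = 0 <;> simp [D, ht]
  have hDinv : D⁻¹ *ᵥ Pi.single 0 1 = Pi.single 0 1 := by
    conv_lhs => rw [← hDe, mulVec_mulVec, nonsing_inv_mul D hD, one_mulVec]
  have hG : (design x d * D)ᵀ * diagonal w * (design x d * D) = D * G * D := by
    simp only [G, transpose_mul, diagonal_transpose, D, Matrix.mul_assoc]
  have hcancel : diagonal w * (design x d * D) * (D * G * D)⁻¹
      = diagonal w * design x d * G⁻¹ * D⁻¹ := by
    simp only [Matrix.mul_inv_rev, Matrix.mul_assoc, mul_nonsing_inv_cancel_left D _ hD]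
  rw [hG, hcancel, ← mulVec_mulVec, hDinv]

end WLPR

theorem oddMask_eq_mask (n d : ℕ) (v : ℤ → ℝ) :
    oddMask n d v = WLPR.mask (fun l : {l : ℤ // l ∈ Finset.Icc (1 - (n : ℤ)) (n : ℤ)} =>
      ((2 * (l : ℤ) - 1 : ℤ) : ℝ)) (fun l => v l) d :=
  rfl

theorem stmt6_general (n d : ℕ)
    (v : ℤ → ℝ)
    (hsym : ∀ l ∈ Finset.Icc (1 - (n : ℤ)) (n : ℤ), v l = v (1 - l)) :
    ∀ (l : ℤ) (hl : l ∈ Finset.Icc (1 - (n : ℤ)) (n : ℤ))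
      (hl' : 1 - l ∈ Finset.Icc (1 - (n : ℤ)) (n : ℤ)),
      oddMask n d v ⟨l, hl⟩ = oddMask n d v ⟨1 - l, hl'⟩ := by
  intro l hl hl'
  let σ := (Equiv.subLeft (1 : ℤ)).subtypeEquiv fun k : ℤ =>
    show k ∈ Finset.Icc (1 - (n : ℤ)) n ↔ 1 - k ∈ Finset.Icc (1 - (n : ℤ)) n by
      simp only [Finset.mem_Icc]; omega
  let x := fun k : {k : ℤ // k ∈ Finset.Icc (1 - (n : ℤ)) n} => ((2 * (k : ℤ) - 1 : ℤ) : ℝ)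
  let w := fun k : {k : ℤ // k ∈ Finset.Icc (1 - (n : ℤ)) n} => v k
  have hx : x ∘ σ = (-1 : ℝ) • x := by
    funext k
    show ((2 * (1 - (k : ℤ)) - 1 : ℤ) : ℝ) = -1 * ((2 * (k : ℤ) - 1 : ℤ) : ℝ)
    push_cast; ring
  have hw : w ∘ σ = w := funext fun k => (hsym k k.2).symm
  have hmask : WLPR.mask x w d ∘ σ = WLPR.mask x w d := by
    rw [← WLPR.mask_comp_equiv, hx, hw, WLPR.mask_smul _ _ _ isUnit_one.neg]
  rw [oddMask_eq_mask]
  exact (congrFun hmask ⟨l, hl⟩).symm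

/-- with `n ≥ 1`, `d + 1 ≤ 2n`, nodes `x_l = 2l−1` for `l = 1−n,…,n`
and positive weights `v` with the symmetry `v_l = v_{1−l}`, the WLPR mask is
symmetric: `a_l = a_{1−l}` for all `l = 1−n,…,n`. -/
theorem stmt6 (n d : ℕ) (hn : 1 ≤ n) (hd : d + 1 ≤ 2 * n)
    (v : ℤ → ℝ) (hv : ∀ l ∈ Finset.Icc (1 - (n : ℤ)) (n : ℤ), 0 < v l)
    (hsym : ∀ l ∈ Finset.Icc (1 - (n : ℤ)) (n : ℤ), v l = v (1 - l)) :
    ∀ (l : ℤ) (hl : l ∈ Finset.Icc (1 - (n : ℤ)) (n : ℤ))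
      (hl' : 1 - l ∈ Finset.Icc (1 - (n : ℤ)) (n : ℤ)),
      oddMask n d v ⟨l, hl⟩ = oddMask n d v ⟨1 - l, hl'⟩ :=
  stmt6_general n d v hsym
end

section
/- In the WLPR setting, assume the node-weight configuration is symmetric about 0: there is a bijection σ of {1,…,m} with x_{σ(l)} = −x_l and w_{σ(l)} = w_l for every l. Then the coefficient vector α = (XᵀWX)⁻¹ e₁ ∈ ℝ^{d+1} has vanishing odd-degree coordinates: α_t = 0 for every odd t with 1 ≤ t ≤ d (coordinates indexed by t = 0,…,d). -/
open Matrix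

/-- The Vandermonde-type design matrix `X` with entries `X_{l,t} = x_l ^ t`. -/
noncomputable def designX (m d : ℕ) (x : Fin m → ℝ) : Matrix (Fin m) (Fin (d + 1)) ℝ :=
  Matrix.of fun l t => x l ^ (t : ℕ)

/-- in the WLPR setting (distinct nodes, positive weights, `m ≥ d+1`),
if the node–weight configuration is symmetric about `0` (a bijection `σ` with
`x_{σ(l)} = −x_l`, `w_{σ(l)} = w_l`), then the coefficient vector
`α = (XᵀWX)⁻¹ e₁ ∈ ℝ^{d+1}` has vanishing odd-degree coordinates. -/
theorem stmt7 (d m : ℕ) (hm : d + 1 ≤ m)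
    (x : Fin m → ℝ) (hx : Function.Injective x)
    (w : Fin m → ℝ) (hw : ∀ l, 0 < w l)
    (σ : Equiv.Perm (Fin m))
    (hxσ : ∀ l, x (σ l) = -x l) (hwσ : ∀ l, w (σ l) = w l) :
    ∀ t : Fin (d + 1), Odd (t : ℕ) →
      (((designX m d x)ᵀ * Matrix.diagonal w * designX m d x)⁻¹ *ᵥ
        Pi.single 0 1) t = 0 := by
  intro t ht
  set X := designX m d x with hX
  set A := Xᵀ * Matrix.diagonal w * X with hA
  set D : Matrix (Fin (d + 1)) (Fin (d + 1)) ℝ :=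
    Matrix.diagonal (fun s => (-1 : ℝ) ^ (s : ℕ)) with hD
  have hDD : D * D = 1 := by
    rw [hD, Matrix.diagonal_mul_diagonal]
    have : (fun i : Fin (d+1) => (-1:ℝ) ^ (i:ℕ) * (-1) ^ (i:ℕ)) = fun _ => (1:ℝ) := by
      funext i
      rw [← pow_add, ← two_mul, pow_mul]
      norm_num
    rw [this, Matrix.diagonal_one]
  have hDinv : D⁻¹ = D := Matrix.inv_eq_right_inv hDD
  -- entrywise formula for A
  have hAentry : ∀ s u : Fin (d + 1),
      A s u = ∑ l, x l ^ (s : ℕ) * w l * x l ^ (u : ℕ) := by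
    intro s u
    rw [hA, Matrix.mul_apply]
    congr 1
    funext l
    rw [Matrix.mul_diagonal]
    simp [hX, designX, Matrix.transpose_apply]
  have hAsym : ∀ s u : Fin (d + 1),
      A s u = (-1 : ℝ) ^ ((s : ℕ) + (u : ℕ)) * A s u := by
    intro s u
    conv_lhs => rw [hAentry s u, ← Equiv.sum_comp σ (fun l => x l ^ (s:ℕ) * w l * x l ^ (u:ℕ))]
    rw [hAentry, Finset.mul_sum]
    congr 1
    funext l
    rw [hxσ, hwσ, neg_pow, neg_pow, pow_add]
    ring
  have hDAD : D * A * D = A := by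
    ext s u
    rw [Matrix.mul_apply]
    have : ∀ j, (D * A) s j * D j u = if j = u then (-1:ℝ)^(s:ℕ) * A s j * (-1)^(u:ℕ) else 0 := by
      intro j
      by_cases hju : j = u
      · subst hju
        simp only [hD, Matrix.mul_diagonal, Matrix.diagonal_mul, Matrix.diagonal_apply_eq, if_pos rfl, if_true]
      · simp [hD, Matrix.diagonal_apply_ne' _ hju, hju]
    rw [Finset.sum_congr rfl (fun j _ => this j), Finset.sum_ite_eq' _ u]
    simp only [Finset.mem_univ, if_true]
    rw [mul_comm ((-1:ℝ)^(s:ℕ) * A s u) _, ← mul_assoc, ← pow_add, add_comm (u:ℕ) (s:ℕ)]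
    exact (hAsym s u).symm
  have hAinv : A⁻¹ = D * A⁻¹ * D := by
    conv_lhs => rw [← hDAD]
    rw [Matrix.mul_inv_rev, Matrix.mul_inv_rev, hDinv, mul_assoc]
  have hDe : D *ᵥ (Pi.single 0 1 : Fin (d+1) → ℝ) = Pi.single 0 1 := by
    ext i
    rw [Matrix.mulVec_diagonal]
    by_cases hi : i = 0
    · subst hi; simp
    · simp [Pi.single_eq_of_ne hi]
  have key : (A⁻¹ *ᵥ Pi.single 0 1) t = (-1:ℝ)^(t:ℕ) * (A⁻¹ *ᵥ Pi.single 0 1) t := by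
    conv_lhs => rw [hAinv]
    rw [← Matrix.mulVec_mulVec, ← Matrix.mulVec_mulVec, hDe, Matrix.mulVec_diagonal]
  have hneg : (-1:ℝ)^(t:ℕ) = -1 := ht.neg_one_pow
  rw [hneg] at key
  linarith [key]
end

section
/- For every λ ∈ (1,+∞)∖ℕ and every positive even weight function ω supported on [−1,1] (so that all weights w_l = ω(l/λ) with |l| < λ are positive), the degree-0/1 WLPR subdivision scheme S_{1,w^λ} is uniformly convergent. -/
open scoped Classical

/-- The degree-0/1 WLPR subdivision operator `S_{1,w^λ}` with bandwidth `λ` and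
(even) weight function `ω`:
`(S f) m = (∑_{l : |2l−m| < λ} ω((2l−m)/λ) f_l) / (∑_{l : |2l−m| < λ} ω((2l−m)/λ))`.
For `m = 2j+i` this is exactly the normalized rule
`(S f)_{2j+i} = ∑_l (w_{2l−i} / ∑_k w_{2k−i}) f_{j+l}` with `w_l = ω(l/λ)`. -/
noncomputable def Swlpr (lam : ℝ) (ω : ℝ → ℝ) (f : ℤ → ℝ) : ℤ → ℝ := fun m =>
  (∑ᶠ l : ℤ, (if |((2 * l - m : ℤ) : ℝ)| < lam
      then ω (((2 * l - m : ℤ) : ℝ) / lam) else 0) * f l) /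
  (∑ᶠ l : ℤ, if |((2 * l - m : ℤ) : ℝ)| < lam
      then ω (((2 * l - m : ℤ) : ℝ) / lam) else 0)

namespace WL
noncomputable def Wt (lam : ℝ) (ω : ℝ → ℝ) (t : ℤ) : ℝ :=
  if |(t : ℝ)| < lam then ω ((t : ℝ) / lam) else 0
noncomputable def Tm (lam : ℝ) (m : ℤ) : Finset ℤ :=
  Finset.Icc ⌈((m : ℝ) - lam)/2⌉ ⌊((m : ℝ) + lam)/2⌋
noncomputable def Dw (lam : ℝ) (ω : ℝ → ℝ) (m : ℤ) : ℝ :=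
  ∑ l ∈ Tm lam m, Wt lam ω (2*l - m)
noncomputable def cw (lam : ℝ) (ω : ℝ → ℝ) (m l : ℤ) : ℝ :=
  Wt lam ω (2*l - m) / Dw lam ω m
variable {lam : ℝ} {ω : ℝ → ℝ}
lemma support_subset (g : ℤ → ℝ) (m : ℤ) :
    Function.support (fun l : ℤ => Wt lam ω (2*l - m) * g l) ⊆ ↑(Tm lam m) := by
  intro l hl
  have hW : Wt lam ω (2*l - m) ≠ 0 := by
    intro h; apply hl; simp [h]
  have habs : |((2*l - m : ℤ) : ℝ)| < lam := by
    by_contra h; exact hW (if_neg h)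
  rw [abs_lt] at habs
  simp only [Tm, Finset.coe_Icc, Set.mem_Icc]
  constructor
  · rw [Int.ceil_le]; push_cast at habs ⊢; linarith
  · rw [Int.le_floor]; push_cast at habs ⊢; linarith
lemma finsum_eq (g : ℤ → ℝ) (m : ℤ) :
    ∑ᶠ l : ℤ, Wt lam ω (2*l - m) * g l = ∑ l ∈ Tm lam m, Wt lam ω (2*l - m) * g l :=
  finsum_eq_sum_of_support_subset _ (support_subset g m)
lemma Dw_eq_finsum (m : ℤ) :
    Dw lam ω m = ∑ᶠ l : ℤ, Wt lam ω (2*l - m) := by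
  have := (finsum_eq (ω := ω) (lam := lam) (fun _ => (1:ℝ)) m).symm
  simpa [Dw, mul_one] using this
lemma Swlpr_eq (g : ℤ → ℝ) (m : ℤ) :
    Swlpr lam ω g m = (∑ l ∈ Tm lam m, Wt lam ω (2*l - m) * g l) / Dw lam ω m := by
  rw [Swlpr, ← finsum_eq g m, Dw_eq_finsum m]
  rfl

section hyp
variable (hlam : 1 < lam) (hωpos : ∀ x ∈ Set.Icc (-1 : ℝ) 1, 0 < ω x)
include hlam hωpos

lemma Wt_nonneg (t : ℤ) : 0 ≤ Wt lam ω t := by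
  rw [Wt]
  split
  · rename_i h
    refine (hωpos _ ?_).le
    rw [Set.mem_Icc, ← abs_le, abs_div, abs_of_pos (by linarith : (0:ℝ) < lam),
      div_le_one (by linarith)]
    exact h.le
  · exact le_refl 0
lemma Wt_pos {t : ℤ} (h : |(t : ℝ)| < lam) : 0 < Wt lam ω t := by
  rw [Wt, if_pos h]
  refine hωpos _ ?_
  rw [Set.mem_Icc, ← abs_le, abs_div, abs_of_pos (by linarith : (0:ℝ) < lam),
    div_le_one (by linarith)]
  exact h.le
lemma mem_Tm {m l : ℤ} (h : |((2*l - m : ℤ) : ℝ)| < lam) : l ∈ Tm lam m := by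
  have hW : Wt lam ω (2*l - m) ≠ 0 := (Wt_pos hlam hωpos h).ne'
  exact support_subset (lam := lam) (ω := ω) (fun _ => (1:ℝ)) m (by simp [hW])
lemma exists_center (m : ℤ) : ∃ l₀ : ℤ, (2*l₀ - m = 0 ∨ 2*l₀ - m = 1) := by
  rcases Int.even_or_odd m with ⟨k, hk⟩ | ⟨k, hk⟩
  · exact ⟨k, Or.inl (by omega)⟩
  · exact ⟨k + 1, Or.inr (by omega)⟩
lemma Dw_pos (m : ℤ) : 0 < Dw lam ω m := by
  obtain ⟨l₀, hl₀⟩ := exists_center (lam := lam) (ω := ω) hlam hωpos m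
  have habs : |((2*l₀ - m : ℤ) : ℝ)| < lam := by
    rcases hl₀ with h | h <;> rw [h] <;> simp <;> linarith
  have hmem : l₀ ∈ Tm lam m := mem_Tm hlam hωpos habs
  have hpos : 0 < Wt lam ω (2*l₀ - m) := Wt_pos hlam hωpos habs
  refine lt_of_lt_of_le hpos ?_
  exact Finset.single_le_sum (f := fun l => Wt lam ω (2*l - m))
    (fun i _ => Wt_nonneg hlam hωpos _) hmem
lemma cw_nonneg (m l : ℤ) : 0 ≤ cw lam ω m l :=
  div_nonneg (Wt_nonneg hlam hωpos _) (Dw_pos hlam hωpos m).le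
lemma sum_cw (m : ℤ) : ∑ l ∈ Tm lam m, cw lam ω m l = 1 := by
  have hD := (Dw_pos hlam hωpos m).ne'
  simp only [cw, ← Finset.sum_div]
  rw [← Dw, div_self hD]
lemma Swlpr_eq_cw (g : ℤ → ℝ) (m : ℤ) :
    Swlpr lam ω g m = ∑ l ∈ Tm lam m, cw lam ω m l * g l := by
  rw [Swlpr_eq g m, Finset.sum_div]
  refine Finset.sum_congr rfl fun l _ => ?_
  rw [cw, div_mul_eq_mul_div, mul_comm]

lemma mix_bound (g : ℤ → ℝ) (m : ℤ) (c : ℝ) (hc : 0 ≤ c)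
    (hg : ∀ l : ℤ, Wt lam ω (2*l - m) ≠ 0 → |g l| ≤ c) :
    |∑ l ∈ Tm lam m, cw lam ω m l * g l| ≤ c := by
  calc |∑ l ∈ Tm lam m, cw lam ω m l * g l|
      ≤ ∑ l ∈ Tm lam m, |cw lam ω m l * g l| := Finset.abs_sum_le_sum_abs _ _
    _ ≤ ∑ l ∈ Tm lam m, cw lam ω m l * c := by
        refine Finset.sum_le_sum fun l _ => ?_
        rw [abs_mul, abs_of_nonneg (cw_nonneg hlam hωpos m l)]
        by_cases hW : Wt lam ω (2*l - m) = 0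
        · simp [cw, hW]
        · exact mul_le_mul_of_nonneg_left ((hg l hW)) (cw_nonneg hlam hωpos m l)
    _ = c := by rw [← Finset.sum_mul, sum_cw hlam hωpos m, one_mul]

lemma Swlpr_bound (g : ℤ → ℝ) (M : ℝ) (hM : 0 ≤ M) (hg : ∀ j, |g j| ≤ M) (m : ℤ) :
    |Swlpr lam ω g m| ≤ M := by
  rw [Swlpr_eq_cw hlam hωpos g m]
  exact mix_bound hlam hωpos g m M hM fun l _ => hg l

lemma Swlpr_sub_pt (g : ℤ → ℝ) (m q : ℤ) :
    Swlpr lam ω g m - g q = ∑ l ∈ Tm lam m, cw lam ω m l * (g l - g q) := by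
  rw [Swlpr_eq_cw hlam hωpos g m]
  have : ∀ l ∈ Tm lam m, cw lam ω m l * (g l - g q)
      = cw lam ω m l * g l - cw lam ω m l * g q := fun l _ => by ring
  rw [Finset.sum_congr rfl this, Finset.sum_sub_distrib, ← Finset.sum_mul,
    sum_cw hlam hωpos m, one_mul]

omit hlam hωpos in
lemma num_shift (g : ℤ → ℝ) (x h : ℤ) :
    ∑ᶠ l : ℤ, Wt lam ω (2*l - (x - 2*h)) * g l
      = ∑ᶠ l : ℤ, Wt lam ω (2*l - x) * g (l - h) := by
  rw [← finsum_comp_equiv (Equiv.subRight h)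
    (f := fun l : ℤ => Wt lam ω (2*l - (x - 2*h)) * g l)]
  apply finsum_congr
  intro l
  simp only [Equiv.subRight_apply]
  ring_nf

omit hlam hωpos in
lemma Swlpr_def (g : ℤ → ℝ) (m : ℤ) :
    Swlpr lam ω g m = (∑ᶠ l : ℤ, Wt lam ω (2*l - m) * g l)
      / (∑ᶠ l : ℤ, Wt lam ω (2*l - m)) := rfl

omit hlam hωpos in
lemma Dw_shift (x h : ℤ) : Dw lam ω (x - 2*h) = Dw lam ω x := by
  rw [Dw_eq_finsum, Dw_eq_finsum]
  have := num_shift (lam := lam) (ω := ω) (fun _ => (1:ℝ)) x h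
  simpa [mul_one] using this

lemma lemA (g : ℤ → ℝ) (x h : ℤ) (c : ℝ) (hc : 0 ≤ c)
    (hg : ∀ u : ℤ, |g u - g (u - h)| ≤ c) :
    |Swlpr lam ω g x - Swlpr lam ω g (x - 2*h)| ≤ c := by
  have key : Swlpr lam ω g (x - 2*h) = ∑ l ∈ Tm lam x, cw lam ω x l * g (l - h) := by
    rw [Swlpr_def, num_shift, ← Dw_eq_finsum, Dw_shift,
      finsum_eq (fun l => g (l - h)) x, Finset.sum_div]
    exact Finset.sum_congr rfl fun l _ => by rw [cw, div_mul_eq_mul_div, mul_comm]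
  rw [Swlpr_eq_cw hlam hωpos g x, key, ← Finset.sum_sub_distrib]
  have : ∀ l ∈ Tm lam x, cw lam ω x l * g l - cw lam ω x l * g (l - h)
      = cw lam ω x l * (g l - g (l - h)) := fun l _ => by ring
  rw [Finset.sum_congr rfl this]
  exact mix_bound hlam hωpos _ x c hc fun l _ => hg l

end hyp

noncomputable def Nb (lam : ℝ) : ℤ := ⌈lam⌉ - 1
noncomputable def WN (lam : ℝ) : ℕ := 2 * (Nb lam).toNat + 1
noncomputable def wmin (lam : ℝ) (ω : ℝ → ℝ) : ℝ := min (ω 0) (min (ω (1/lam)) (ω (-(1/lam))))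
noncomputable def DD (lam : ℝ) (ω : ℝ → ℝ) : ℝ := max (Dw lam ω 0) (Dw lam ω 1)
noncomputable def rho (lam : ℝ) (ω : ℝ → ℝ) : ℝ := min ((wmin lam ω / DD lam ω)^2) (1/2)

section hyp2
variable (hlam : 1 < lam) (hlamnat : ∀ k : ℕ, lam ≠ (k : ℝ))
  (hωpos : ∀ x ∈ Set.Icc (-1 : ℝ) 1, 0 < ω x)

include hlam in
lemma Nb_ge_one : 1 ≤ Nb lam := by
  have : (1 : ℤ) < ⌈lam⌉ := by rw [Int.lt_ceil]; exact_mod_cast hlam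
  rw [Nb]; omega

include hlam in
lemma Nb_lt_lam : ((Nb lam : ℤ) : ℝ) < lam := by
  have := Int.ceil_lt_add_one lam
  rw [Nb]; push_cast; linarith

include hlam hlamnat in
lemma lam_lt_Nb : lam < ((Nb lam : ℤ) : ℝ) + 1 := by
  have h1 : lam ≤ ((⌈lam⌉ : ℤ) : ℝ) := Int.le_ceil lam
  have h2 : lam ≠ ((⌈lam⌉ : ℤ) : ℝ) := by
    intro h
    have hc : (1 : ℤ) < ⌈lam⌉ := by rw [Int.lt_ceil]; exact_mod_cast hlam
    have hz : ⌈lam⌉ = ((⌈lam⌉.toNat : ℕ) : ℤ) := by omega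
    apply hlamnat ⌈lam⌉.toNat
    refine h.trans ?_
    exact_mod_cast congrArg (fun z : ℤ => (z : ℝ)) hz
  have : lam < ((⌈lam⌉ : ℤ) : ℝ) := lt_of_le_of_ne h1 h2
  rw [Nb]; push_cast; linarith

include hlam hωpos in
lemma wmin_pos : 0 < wmin lam ω := by
  have h0 : (0:ℝ) < lam := by linarith
  have h1 : |1/lam| ≤ 1 := by
    rw [abs_div, abs_one, abs_of_pos h0, div_le_one h0]; linarith
  rw [wmin]
  have h2 : |(0:ℝ)| ≤ 1 := by norm_num
  have h3 : |(-(1/lam))| ≤ 1 := by rwa [abs_neg]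
  refine lt_min (hωpos 0 ?_) (lt_min (hωpos _ ?_) (hωpos _ ?_)) <;>
    rw [Set.mem_Icc, ← abs_le] <;> assumption

include hlam hωpos in
lemma Dw_le_DD (m : ℤ) : Dw lam ω m ≤ DD lam ω := by
  rcases Int.even_or_odd m with ⟨k, hk⟩ | ⟨k, hk⟩
  · have : m = 0 - 2*(-k) := by omega
    rw [this, Dw_shift]; exact le_max_left _ _
  · have : m = 1 - 2*(-k) := by omega
    rw [this, Dw_shift]; exact le_max_right _ _

include hlam hωpos in
lemma DD_pos : 0 < DD lam ω := lt_of_lt_of_le (Dw_pos hlam hωpos 0) (le_max_left _ _)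

include hlam hωpos in
lemma Wt_ge_wmin {t : ℤ} (ht : t = 0 ∨ t = 1 ∨ t = -1) : wmin lam ω ≤ Wt lam ω t := by
  have h0 : (0:ℝ) < lam := by linarith
  rcases ht with h | h | h <;> rw [h, Wt] <;>
    [ (rw [if_pos (by simpa using h0)]);
      (rw [if_pos (by rw [Int.cast_one, abs_one]; linarith)]);
      (rw [if_pos (by rw [Int.cast_neg, Int.cast_one, abs_neg, abs_one]; linarith)])]
  · simpa [wmin] using min_le_left _ _
  · have : ((1:ℤ):ℝ)/lam = 1/lam := by norm_num
    rw [this]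
    exact le_trans (min_le_right _ _) (min_le_left _ _)
  · have : ((-1:ℤ):ℝ)/lam = -(1/lam) := by push_cast; ring
    rw [this]
    exact le_trans (min_le_right _ _) (min_le_right _ _)

include hlam hωpos in
lemma cw_ge {m l : ℤ} (h : 2*l - m = 0 ∨ 2*l - m = 1 ∨ 2*l - m = -1) :
    wmin lam ω / DD lam ω ≤ cw lam ω m l := by
  rw [cw]
  have h1 : wmin lam ω ≤ Wt lam ω (2*l - m) := Wt_ge_wmin hlam hωpos h
  have h2 : Dw lam ω m ≤ DD lam ω := Dw_le_DD hlam hωpos m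
  exact div_le_div₀ (le_trans (wmin_pos hlam hωpos).le h1) h1 (Dw_pos hlam hωpos m) h2

include hlam hωpos in
lemma cw_le_one (m l : ℤ) : cw lam ω m l ≤ 1 := by
  by_cases hm : l ∈ Tm lam m
  · rw [← sum_cw hlam hωpos m]
    exact Finset.single_le_sum (f := fun l => cw lam ω m l)
      (fun i _ => cw_nonneg hlam hωpos m i) hm
  · have : Wt lam ω (2*l - m) = 0 := by
      by_contra hW
      exact hm (support_subset (lam := lam) (ω := ω) (fun _ => (1:ℝ)) m (by simp [hW]))
    simp [cw, this]

include hlam hωpos in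
lemma rho_le_pi {m l : ℤ} {m' l' : ℤ}
    (h : 2*l - m = 0 ∨ 2*l - m = 1 ∨ 2*l - m = -1)
    (h' : 2*l' - m' = 0 ∨ 2*l' - m' = 1 ∨ 2*l' - m' = -1) :
    rho lam ω ≤ cw lam ω m l * cw lam ω m' l' := by
  have hq : 0 ≤ wmin lam ω / DD lam ω :=
    div_nonneg (wmin_pos hlam hωpos).le (DD_pos hlam hωpos).le
  refine le_trans (min_le_left _ _) ?_
  rw [sq]
  exact mul_le_mul (cw_ge hlam hωpos h) (cw_ge hlam hωpos h') hq
    (cw_nonneg hlam hωpos m l)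

include hlam hωpos in
lemma rho_pos : 0 < rho lam ω := by
  refine lt_min (pow_pos (div_pos (wmin_pos hlam hωpos) (DD_pos hlam hωpos)) 2) (by norm_num)

lemma rho_le_half : rho lam ω ≤ 1/2 := min_le_right _ _

include hlam hlamnat hωpos in
lemma far_dist {x y l l' : ℤ} (hy : y = x - Int.ofNat 0 ∨ True) : True := trivial

include hlam hωpos in
lemma double_sum (g : ℤ → ℝ) (x y : ℤ) :
    Swlpr lam ω g x - Swlpr lam ω g y
      = ∑ p ∈ Tm lam x ×ˢ Tm lam y, cw lam ω x p.1 * cw lam ω y p.2 * (g p.1 - g p.2) := by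
  rw [Finset.sum_product]
  rw [Swlpr_eq_cw hlam hωpos g x, Swlpr_eq_cw hlam hωpos g y]
  have hin : ∀ l ∈ Tm lam x, ∑ l' ∈ Tm lam y, cw lam ω x l * cw lam ω y l' * (g l - g l')
      = cw lam ω x l * g l - cw lam ω x l * (∑ l' ∈ Tm lam y, cw lam ω y l' * g l') := by
    intro l _
    have : ∀ l' ∈ Tm lam y, cw lam ω x l * cw lam ω y l' * (g l - g l')
        = (cw lam ω x l * g l) * cw lam ω y l' - cw lam ω x l * (cw lam ω y l' * g l') :=
      fun l' _ => by ring
    rw [Finset.sum_congr rfl this, Finset.sum_sub_distrib, ← Finset.mul_sum, ← Finset.mul_sum,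
      sum_cw hlam hωpos y, mul_one]
  rw [Finset.sum_congr rfl hin, Finset.sum_sub_distrib, ← Finset.sum_mul,
    sum_cw hlam hωpos x, one_mul]

include hlam hωpos in
lemma sum_pi_one (x y : ℤ) :
    ∑ p ∈ Tm lam x ×ˢ Tm lam y, cw lam ω x p.1 * cw lam ω y p.2 = 1 := by
  rw [Finset.sum_product, ← Finset.sum_mul_sum, sum_cw hlam hωpos x, sum_cw hlam hωpos y,
    one_mul]

include hlam hlamnat hωpos in
lemma lemB (g : ℤ → ℝ) (x d : ℤ) (hd : 0 < d) (hodd : d % 2 = 1)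
    (hdW : d ≤ 2*(Nb lam)+1)
    (c₁ c₂ : ℝ) (hc1 : 0 ≤ c₁) (h12 : c₁ ≤ c₂)
    (hnear : ∀ u v : ℤ, u - v = (d-1)/2 → |g u - g v| ≤ c₁)
    (hfar : ∀ u v : ℤ, (u - v).natAbs ≤ WN lam → |g u - g v| ≤ c₂) :
    |Swlpr lam ω g x - Swlpr lam ω g (x - d)|
      ≤ rho lam ω * c₁ + (1 - rho lam ω) * c₂ := by
  have hN1 : 1 ≤ Nb lam := Nb_ge_one hlam
  have hNlt : ((Nb lam : ℤ) : ℝ) < lam := Nb_lt_lam hlam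
  have hltN : lam < ((Nb lam : ℤ) : ℝ) + 1 := lam_lt_Nb hlam hlamnat
  set y := x - d with hy
  -- the distinguished pair
  obtain ⟨a, ha⟩ : ∃ a : ℤ, 2*a - x = 0 ∨ 2*a - x = -1 := by
    rcases Int.even_or_odd x with ⟨k, hk⟩ | ⟨k, hk⟩
    · exact ⟨k, Or.inl (by omega)⟩
    · exact ⟨k, Or.inr (by omega)⟩
  set b := a - (d-1)/2 with hb
  have hab : 2*b - y = 1 ∨ 2*b - y = 0 := by omega
  have habs_a : |((2*a - x : ℤ) : ℝ)| < lam := by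
    rcases ha with h | h <;> rw [h] <;> simp <;> linarith
  have habs_b : |((2*b - y : ℤ) : ℝ)| < lam := by
    rcases hab with h | h <;> rw [h] <;> simp <;> linarith
  have hmem : (a, b) ∈ Tm lam x ×ˢ Tm lam y := by
    rw [Finset.mem_product]
    exact ⟨mem_Tm hlam hωpos habs_a, mem_Tm hlam hωpos habs_b⟩
  set P := Tm lam x ×ˢ Tm lam y with hP
  set Φ : ℤ × ℤ → ℝ := fun p => cw lam ω x p.1 * cw lam ω y p.2 * (g p.1 - g p.2) with hΦ
  set Pi : ℤ × ℤ → ℝ := fun p => cw lam ω x p.1 * cw lam ω y p.2 with hPi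
  -- per-term far bound
  have hterm : ∀ p ∈ P, |Φ p| ≤ Pi p * c₂ := by
    rintro ⟨l, l'⟩ _
    by_cases hW : Wt lam ω (2*l - x) = 0 ∨ Wt lam ω (2*l' - y) = 0
    · have : Pi (l, l') = 0 := by
        rcases hW with h | h <;> simp [hPi, cw, h]
      simp [hΦ, hPi] at this ⊢
      rcases this with h | h <;> simp [h]
    · push_neg at hW
      have e1 : |((2*l - x : ℤ) : ℝ)| < lam := by
        by_contra h; exact hW.1 (if_neg h)
      have e2 : |((2*l' - y : ℤ) : ℝ)| < lam := by
        by_contra h; exact hW.2 (if_neg h)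
      have hfar' : (l - l').natAbs ≤ WN lam := by
        have t1 : ((2*(l - l') : ℤ) : ℝ) = ((2*l - x : ℤ) : ℝ) - ((2*l' - y : ℤ) : ℝ)
            + ((d : ℤ) : ℝ) := by push_cast [hy]; ring
        rw [abs_lt] at e1 e2
        have hdr : ((d : ℤ) : ℝ) ≤ 2*((Nb lam : ℤ) : ℝ) + 1 := by exact_mod_cast hdW
        have hyR : ((y : ℤ) : ℝ) = ((x : ℤ) : ℝ) - ((d : ℤ) : ℝ) := by
          rw [hy]; push_cast; ring
        have hdR : (0:ℝ) < ((d : ℤ) : ℝ) := by exact_mod_cast hd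
        have hN1R : (1:ℝ) ≤ ((Nb lam : ℤ) : ℝ) := by exact_mod_cast hN1
        have hR : |((2*(l - l') : ℤ) : ℝ)| < ((4*(Nb lam)+3 : ℤ) : ℝ) := by
          rw [t1, abs_lt]
          push_cast at e1 e2 hdr hyR ⊢
          constructor <;> linarith
        have hZ : |2*(l - l')| < 4*(Nb lam)+3 := by
          rw [← Int.cast_abs] at hR
          exact_mod_cast hR
        rw [abs_lt] at hZ
        have hWNc : (WN lam : ℤ) = 2*(Nb lam)+1 := by rw [WN]; push_cast; omega
        omega
      calc |Φ (l, l')| = Pi (l, l') * |g l - g l'| := by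
            rw [hΦ, hPi, abs_mul, abs_of_nonneg]
            exact mul_nonneg (cw_nonneg hlam hωpos x l) (cw_nonneg hlam hωpos y l')
        _ ≤ Pi (l, l') * c₂ := by
            refine mul_le_mul_of_nonneg_left (hfar _ _ hfar') ?_
            exact mul_nonneg (cw_nonneg hlam hωpos x l) (cw_nonneg hlam hωpos y l')
  have hPinn : ∀ p ∈ P, 0 ≤ Pi p := fun p _ =>
    mul_nonneg (cw_nonneg hlam hωpos x p.1) (cw_nonneg hlam hωpos y p.2)
  -- split off the distinguished pair
  have habssum : |Swlpr lam ω g x - Swlpr lam ω g y| ≤ ∑ p ∈ P, |Φ p| := by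
    rw [double_sum hlam hωpos g x y]
    exact Finset.abs_sum_le_sum_abs _ _
  have hsplitΦ : ∑ p ∈ P, |Φ p| = |Φ (a, b)| + ∑ p ∈ P.erase (a, b), |Φ p| :=
    (Finset.add_sum_erase P _ hmem).symm
  have hsplitPi : Pi (a, b) + ∑ p ∈ P.erase (a, b), Pi p = 1 := by
    rw [Finset.add_sum_erase P _ hmem]
    exact sum_pi_one hlam hωpos x y
  have hrest : ∑ p ∈ P.erase (a, b), |Φ p| ≤ (1 - Pi (a, b)) * c₂ := by
    have h1 : ∑ p ∈ P.erase (a, b), |Φ p| ≤ ∑ p ∈ P.erase (a, b), Pi p * c₂ :=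
      Finset.sum_le_sum fun p hp => hterm p (Finset.mem_of_mem_erase hp)
    have h2 : ∑ p ∈ P.erase (a, b), Pi p * c₂ = (1 - Pi (a, b)) * c₂ := by
      rw [← Finset.sum_mul]
      congr 1
      linarith [hsplitPi]
    linarith
  have hnearb : |Φ (a, b)| ≤ Pi (a, b) * c₁ := by
    have : |g a - g b| ≤ c₁ := hnear a b (by omega)
    calc |Φ (a, b)| = Pi (a, b) * |g a - g b| := by
          rw [hΦ, hPi, abs_mul, abs_of_nonneg (hPinn _ hmem)]
      _ ≤ Pi (a, b) * c₁ := mul_le_mul_of_nonneg_left this (hPinn _ hmem)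
  have hπρ : rho lam ω ≤ Pi (a, b) := by
    refine rho_le_pi hlam hωpos ?_ ?_
    · rcases ha with h | h
      · exact Or.inl h
      · exact Or.inr (Or.inr h)
    · rcases hab with h | h
      · exact Or.inr (Or.inl h)
      · exact Or.inl h
  have hπ1 : Pi (a, b) ≤ 1 := by
    have := mul_le_mul (cw_le_one hlam hωpos x a) (cw_le_one hlam hωpos y b)
      (cw_nonneg hlam hωpos y b) zero_le_one
    simpa [hPi] using this
  have hkey : (Pi (a, b) - rho lam ω) * (c₂ - c₁) ≥ 0 :=
    mul_nonneg (by linarith) (by linarith)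
  have hfinal : ∑ p ∈ P, |Φ p| ≤ rho lam ω * c₁ + (1 - rho lam ω) * c₂ := by
    rw [hsplitΦ]
    nlinarith [hnearb, hrest, hkey]
  exact habssum.trans hfinal

end hyp2

def sz (d : ℕ) : ℕ :=
  if h : d = 0 then 0 else sz (d/2) + 1
decreasing_by exact Nat.div_lt_self (Nat.pos_of_ne_zero h) one_lt_two

lemma sz_zero : sz 0 = 0 := by rw [sz]; rfl

lemma sz_succ {d : ℕ} (h : d ≠ 0) : sz d = sz (d/2) + 1 := by
  rw [sz]; simp [h]

lemma sz_mono : ∀ {d e : ℕ}, d ≤ e → sz d ≤ sz e := by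
  intro d
  induction d using Nat.strong_induction_on with
  | _ d IH =>
    intro e hde
    by_cases hd : d = 0
    · subst hd; simp [sz_zero]
    · have he : e ≠ 0 := by omega
      rw [sz_succ hd, sz_succ he]
      have : d / 2 < d := Nat.div_lt_self (Nat.pos_of_ne_zero hd) one_lt_two
      exact Nat.succ_le_succ (IH _ this (Nat.div_le_div_right hde))

section hyp3
variable (hlam : 1 < lam) (hlamnat : ∀ k : ℕ, lam ≠ (k : ℝ))
  (hωpos : ∀ x ∈ Set.Icc (-1 : ℝ) 1, 0 < ω x)

include hlam in
lemma WN_cast : (WN lam : ℤ) = 2*(Nb lam)+1 := by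
  have hN1 : 1 ≤ Nb lam := Nb_ge_one hlam
  rw [WN]; push_cast; omega

include hlam hlamnat hωpos in
lemma mono1 (g : ℤ → ℝ) (c : ℝ) (hc : 0 ≤ c)
    (h : ∀ x y : ℤ, (x - y).natAbs ≤ WN lam → |g x - g y| ≤ c) :
    ∀ x y : ℤ, (x - y).natAbs ≤ WN lam → |Swlpr lam ω g x - Swlpr lam ω g y| ≤ c := by
  have hWNc := WN_cast hlam
  intro x y hxy
  rcases Int.even_or_odd (x - y) with ⟨h2, hh⟩ | ⟨h2, hh⟩
  · have hy : y = x - 2*h2 := by omega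
    rw [hy]
    refine lemA hlam hωpos g x h2 c hc fun u => ?_
    exact h u (u - h2) (by omega)
  · -- odd case
    have hoddcalc : ∀ z w : ℤ, z - w = 2*h2+1 → (z - w).natAbs ≤ WN lam →
        |Swlpr lam ω g z - Swlpr lam ω g w| ≤ c := by
      intro z w hzw hzwW
      set d : ℤ := z - w with hdd
      have hd : 0 < d ∨ d < 0 := by omega
      rcases hd with hd | hd
      · have : w = z - d := by omega
        rw [this]
        have hres := lemB hlam hlamnat hωpos g z d hd (by omega) (by omega) c c hc le_rfl
          (fun u v huv => h u v (by omega)) (fun u v huv => h u v huv)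
        calc |Swlpr lam ω g z - Swlpr lam ω g (z - d)|
            ≤ rho lam ω * c + (1 - rho lam ω) * c := hres
          _ = c := by ring
      · rw [abs_sub_comm]
        have : z = w - (-d) := by omega
        rw [this]
        have hres := lemB hlam hlamnat hωpos g w (-d) (by omega) (by omega) (by omega) c c hc
          le_rfl (fun u v huv => h u v (by omega)) (fun u v huv => h u v huv)
        calc |Swlpr lam ω g w - Swlpr lam ω g (w - -d)|
            ≤ rho lam ω * c + (1 - rho lam ω) * c := hres
          _ = c := by ring
    exact hoddcalc x y hh hxy

include hlam hlamnat hωpos in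
lemma core (A : ℕ → ℤ → ℝ) (hA : ∀ k, A (k+1) = Swlpr lam ω (A k)) :
    ∀ d k : ℕ, ∀ c : ℝ, 0 ≤ c →
    (∀ x y : ℤ, (x - y).natAbs ≤ WN lam → |A k x - A k y| ≤ c) →
    ∀ x y : ℤ, (x - y).natAbs = d → d ≤ WN lam →
    |A (k + sz d) x - A (k + sz d) y| ≤ (1 - rho lam ω ^ (sz d)) * c := by
  have hWNc := WN_cast hlam
  have hρ0 : 0 ≤ rho lam ω := (rho_pos hlam hωpos).le
  have hρ1 : rho lam ω ≤ 1 := le_trans (rho_le_half (lam := lam) (ω := ω)) (by norm_num)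
  intro d
  induction d using Nat.strong_induction_on with
  | _ d IH =>
    intro k c hc hk x y hxy hdW
    have hmono : ∀ j, ∀ x y : ℤ, (x - y).natAbs ≤ WN lam → |A (k+j) x - A (k+j) y| ≤ c := by
      intro j
      induction j with
      | zero => exact hk
      | succ j IHj =>
        have : A (k + (j+1)) = Swlpr lam ω (A (k+j)) := by
          rw [show k + (j+1) = (k+j) + 1 by ring, hA]
        rw [this]
        exact mono1 hlam hlamnat hωpos (A (k+j)) c hc IHj
    by_cases hd0 : d = 0
    · subst hd0
      have : x = y := by omega
      subst this
      simp [sz_zero]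
    · have hdlt : d / 2 < d := Nat.div_lt_self (Nat.pos_of_ne_zero hd0) one_lt_two
      have hsz : sz d = sz (d/2) + 1 := sz_succ hd0
      have hlevel : k + sz d = (k + sz (d/2)) + 1 := by omega
      have hstep : A (k + sz d) = Swlpr lam ω (A (k + sz (d/2))) := by rw [hlevel, hA]
      set s' := sz (d/2) with hs'
      have hc' : 0 ≤ (1 - rho lam ω ^ s') * c :=
        mul_nonneg (by nlinarith [pow_le_one₀ hρ0 hρ1 (n := s')]) hc
      have hmonot : (1 - rho lam ω ^ s') * c ≤ (1 - rho lam ω ^ (sz d)) * c := by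
        have : rho lam ω ^ (sz d) ≤ rho lam ω ^ s' := by
          rw [hsz]
          calc rho lam ω ^ (s'+1) = rho lam ω ^ s' * rho lam ω := pow_succ _ _
            _ ≤ rho lam ω ^ s' * 1 := by
                exact mul_le_mul_of_nonneg_left hρ1 (pow_nonneg hρ0 _)
            _ = rho lam ω ^ s' := mul_one _
        exact mul_le_mul_of_nonneg_right (by linarith) hc
      have IH' := IH (d/2) hdlt k c hc hk
      rcases Nat.even_or_odd d with ⟨e, he⟩ | ⟨e, he⟩
      · -- even
        obtain ⟨h2, hh2⟩ : ∃ h2 : ℤ, x - y = 2*h2 := ⟨(x-y)/2, by omega⟩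
        have hy : y = x - 2*h2 := by omega
        rw [hstep, hy]
        refine le_trans (lemA hlam hωpos _ x h2 _ hc' fun u => ?_) hmonot
        exact IH' u (u - h2) (by omega) (by omega)
      · -- odd
        have hmain : ∀ z w : ℤ, z - w = (d : ℤ) →
            |A (k + sz d) z - A (k + sz d) w| ≤ (1 - rho lam ω ^ (sz d)) * c := by
          intro z w hzw
          have hw : w = z - (d : ℤ) := by omega
          rw [hstep, hw]
          have hres := lemB hlam hlamnat hωpos (A (k + s')) z (d:ℤ) (by omega) (by omega)
            (by omega) ((1 - rho lam ω ^ s') * c) c hc' (by nlinarith [pow_nonneg hρ0 s'])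
            (fun u v huv => IH' u v (by omega) (by omega))
            (fun u v huv => hmono s' u v huv)
          refine le_trans hres ?_
          have : rho lam ω * ((1 - rho lam ω ^ s') * c) + (1 - rho lam ω) * c
              = (1 - rho lam ω ^ s' * rho lam ω) * c := by ring
          rw [this, hsz, pow_succ]
        have hor : x - y = (d:ℤ) ∨ y - x = (d:ℤ) := by omega
        rcases hor with hor | hor
        · exact hmain x y hor
        · rw [abs_sub_comm]
          exact hmain y x hor

include hlam hωpos in
lemma iter_bound (f : ℤ → ℝ) (M : ℝ) (hM : 0 ≤ M) (hf : ∀ j, |f j| ≤ M) :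
    ∀ k j, |(Swlpr lam ω)^[k] f j| ≤ M := by
  intro k
  induction k with
  | zero => exact hf
  | succ k IHk =>
    intro j
    rw [Function.iterate_succ_apply']
    exact Swlpr_bound hlam hωpos _ M hM IHk j

include hlam hlamnat hωpos in
lemma ubound (f : ℤ → ℝ) (M : ℝ) (hM : 0 ≤ M) (hf : ∀ j, |f j| ≤ M) :
    ∀ q k, q * sz (WN lam) ≤ k → ∀ x y : ℤ, (x - y).natAbs ≤ WN lam →
    |(Swlpr lam ω)^[k] f x - (Swlpr lam ω)^[k] f y|
      ≤ 2*M*(1 - rho lam ω ^ (sz (WN lam)))^q := by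
  have hρ0 : 0 ≤ rho lam ω := (rho_pos hlam hωpos).le
  have hρ1 : rho lam ω ≤ 1 := le_trans (rho_le_half (lam := lam) (ω := ω)) (by norm_num)
  have hγ0 : 0 ≤ 1 - rho lam ω ^ (sz (WN lam)) := by
    nlinarith [pow_le_one₀ hρ0 hρ1 (n := sz (WN lam))]
  intro q
  induction q with
  | zero =>
    intro k _ x y _
    simp only [pow_zero, mul_one]
    calc |(Swlpr lam ω)^[k] f x - (Swlpr lam ω)^[k] f y|
        ≤ |(Swlpr lam ω)^[k] f x| + |(Swlpr lam ω)^[k] f y| := abs_sub _ _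
      _ ≤ 2*M := by
          have h1 := iter_bound hlam hωpos f M hM hf k x
          have h2 := iter_bound hlam hωpos f M hM hf k y
          linarith
  | succ q IHq =>
    intro k hkq x y hxy
    set d := (x - y).natAbs with hd
    have hszd : sz d ≤ sz (WN lam) := sz_mono hxy
    have hkq' : q * sz (WN lam) + sz (WN lam) ≤ k := by
      calc q * sz (WN lam) + sz (WN lam) = (q+1) * sz (WN lam) := by ring
        _ ≤ k := hkq
    have hk0 : q * sz (WN lam) ≤ k - sz d := by omega
    have hksum : (k - sz d) + sz d = k := by omega
    have hcore := core hlam hlamnat hωpos (fun k => (Swlpr lam ω)^[k] f)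
      (fun k => Function.iterate_succ_apply' (Swlpr lam ω) k f) d (k - sz d)
      (2*M*(1 - rho lam ω ^ (sz (WN lam)))^q)
      (by positivity)
      (IHq (k - sz d) hk0) x y hd.symm hxy
    rw [hksum] at hcore
    refine le_trans hcore ?_
    have hple : rho lam ω ^ (sz (WN lam)) ≤ rho lam ω ^ (sz d) :=
      pow_le_pow_of_le_one hρ0 hρ1 hszd
    calc (1 - rho lam ω ^ (sz d)) * (2*M*(1 - rho lam ω ^ (sz (WN lam)))^q)
        ≤ (1 - rho lam ω ^ (sz (WN lam))) * (2*M*(1 - rho lam ω ^ (sz (WN lam)))^q) := by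
          refine mul_le_mul_of_nonneg_right (by linarith) (by positivity)
      _ = 2*M*(1 - rho lam ω ^ (sz (WN lam)))^(q+1) := by ring

include hlam hlamnat hωpos in
lemma step_bound (f : ℤ → ℝ) (M : ℝ) (hM : 0 ≤ M) (hf : ∀ j, |f j| ≤ M) (k : ℕ) (j q : ℤ)
    (hq : (2*q - j).natAbs ≤ 1) :
    |(Swlpr lam ω)^[k+1] f j - (Swlpr lam ω)^[k] f q|
      ≤ 2*M*(1 - rho lam ω ^ sz (WN lam))^(k / sz (WN lam)) := by
  have hρ0 : 0 ≤ rho lam ω := (rho_pos hlam hωpos).le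
  have hρ1 : rho lam ω ≤ 1 := le_trans (rho_le_half (lam := lam) (ω := ω)) (by norm_num)
  have hγ0 : 0 ≤ 1 - rho lam ω ^ (sz (WN lam)) := by
    nlinarith [pow_le_one₀ hρ0 hρ1 (n := sz (WN lam))]
  set g := (Swlpr lam ω)^[k] f with hg
  rw [Function.iterate_succ_apply', Swlpr_sub_pt hlam hωpos g j q]
  refine mix_bound hlam hωpos _ j _ (by positivity) ?_
  intro l hW
  have e1 : |((2*l - j : ℤ) : ℝ)| < lam := by
    by_contra h; exact hW (if_neg h)
  have hNlt := Nb_lt_lam hlam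
  have hltN := lam_lt_Nb hlam hlamnat
  have hN1 := Nb_ge_one hlam
  have hWNc := WN_cast hlam
  have hdist : (l - q).natAbs ≤ WN lam := by
    have hqR : |((2*q - j : ℤ) : ℝ)| ≤ 1 := by
      have h1 : ((2*q - j).natAbs : ℝ) ≤ 1 := by exact_mod_cast hq
      rw [Nat.cast_natAbs, Int.cast_abs] at h1
      exact h1
    have t1 : ((2*(l - q) : ℤ) : ℝ) = ((2*l - j : ℤ) : ℝ) - ((2*q - j : ℤ) : ℝ) := by
      push_cast; ring
    have hR : |((2*(l - q) : ℤ) : ℝ)| < (((Nb lam) + 2 : ℤ) : ℝ) := by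
      rw [t1]
      calc |((2*l - j : ℤ) : ℝ) - ((2*q - j : ℤ) : ℝ)|
          ≤ |((2*l - j : ℤ) : ℝ)| + |((2*q - j : ℤ) : ℝ)| := abs_sub _ _
        _ < lam + 1 := by linarith
        _ < (((Nb lam) + 2 : ℤ) : ℝ) := by push_cast; linarith
    have hZ : |2*(l - q)| < (Nb lam) + 2 := by
      rw [← Int.cast_abs] at hR
      exact_mod_cast hR
    rw [abs_lt] at hZ
    omega
  exact ubound hlam hlamnat hωpos f M hM hf (k / sz (WN lam)) k (Nat.div_mul_le_self _ _) l q
    hdist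

end hyp3
end WL

/-- for every `λ ∈ (1,∞) ∖ ℕ` and every positive even weight function `ω`
on `[−1,1]`, the degree-0/1 WLPR subdivision scheme `S_{1,w^λ}` is uniformly
convergent. -/
theorem stmt12 (lam : ℝ) (hlam : 1 < lam) (hlamnat : ∀ k : ℕ, lam ≠ (k : ℝ))
    (ω : ℝ → ℝ) (hωeven : ∀ x : ℝ, ω (-x) = ω x)
    (hωpos : ∀ x ∈ Set.Icc (-1 : ℝ) 1, 0 < ω x) :
    UnifConvergent (Swlpr lam ω) := by
  intro f hbf
  obtain ⟨M0, hM0⟩ := hbf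
  set M := max M0 0 with hMdef
  have hM : 0 ≤ M := le_max_right _ _
  have hf : ∀ j, |f j| ≤ M := fun j => le_trans (hM0 j) (le_max_left _ _)
  -- constants
  have hρ0 : 0 ≤ WL.rho lam ω := (WL.rho_pos hlam hωpos).le
  have hρp : 0 < WL.rho lam ω := WL.rho_pos hlam hωpos
  have hρh : WL.rho lam ω ≤ 1/2 := WL.rho_le_half
  have hρ1 : WL.rho lam ω ≤ 1 := le_trans hρh (by norm_num)
  have hWN1 : 1 ≤ WL.WN lam := by rw [WL.WN]; omega
  have hWNne : WL.WN lam ≠ 0 := by omega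
  set Sb := WL.sz (WL.WN lam) with hSbdef
  have hSb1 : 1 ≤ Sb := by rw [hSbdef, WL.sz_succ hWNne]; omega
  set γ := 1 - WL.rho lam ω ^ Sb with hγdef
  have hρSb : WL.rho lam ω ^ Sb ≤ WL.rho lam ω ^ 1 := pow_le_pow_of_le_one hρ0 hρ1 hSb1
  have hγpos : 0 < γ := by rw [hγdef]; rw [pow_one] at hρSb; linarith
  have hγlt1 : γ < 1 := by
    have := pow_pos hρp Sb; rw [hγdef]; linarith
  have hγle1 : γ ≤ 1 := hγlt1.le
  set A : ℕ → ℤ → ℝ := fun k => (Swlpr lam ω)^[k] f with hA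
  have hub : ∀ (k : ℕ) (x y : ℤ), (x - y).natAbs ≤ WL.WN lam →
      |A k x - A k y| ≤ 2*M*γ^(k / Sb) := fun k x y h =>
    WL.ubound hlam hlamnat hωpos f M hM hf (k / Sb) k (Nat.div_mul_le_self k Sb) x y h
  set a : ℕ → ℝ → ℝ := fun k x => A k ⌊(2:ℝ)^k * x⌋ with ha
  -- one-step Cauchy bound
  have hstep : ∀ (k : ℕ) (x : ℝ), |a (k+1) x - a k x| ≤ 2*M*γ^(k / Sb) := by
    intro k x
    have e1 : ((⌊(2:ℝ)^k * x⌋ : ℤ) : ℝ) ≤ (2:ℝ)^k * x := Int.floor_le _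
    have e2 : (2:ℝ)^k * x < (⌊(2:ℝ)^k * x⌋ : ℤ) + 1 := Int.lt_floor_add_one _
    have hj1 : (2*⌊(2:ℝ)^k * x⌋ : ℤ) ≤ ⌊(2:ℝ)^(k+1) * x⌋ := by
      rw [Int.le_floor]
      push_cast
      rw [pow_succ]
      nlinarith
    have hj2 : (⌊(2:ℝ)^(k+1) * x⌋ : ℤ) < 2*⌊(2:ℝ)^k * x⌋ + 2 := by
      rw [Int.floor_lt]
      push_cast
      rw [pow_succ]
      nlinarith
    have hadj : (2*⌊(2:ℝ)^k * x⌋ - ⌊(2:ℝ)^(k+1) * x⌋).natAbs ≤ 1 := by omega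
    exact WL.step_bound hlam hlamnat hωpos f M hM hf k _ _ hadj
  -- geometric bound
  set r := γ ^ ((Sb : ℝ))⁻¹ with hrdef
  have hSbR : (0:ℝ) < (Sb : ℝ) := by exact_mod_cast hSb1
  have hrnn : 0 ≤ r := Real.rpow_nonneg hγpos.le _
  have hr1 : r < 1 := Real.rpow_lt_one hγpos.le hγlt1 (by positivity)
  set C := 2*M/γ with hCdef
  have hBr : ∀ k : ℕ, 2*M*γ^(k / Sb) ≤ C * r^k := by
    intro k
    have hfloor : (k : ℝ)/(Sb : ℝ) - 1 ≤ ((k / Sb : ℕ) : ℝ) := by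
      have hdm : k < Sb * (k / Sb) + Sb := by
        have h1 := Nat.div_add_mod k Sb
        have h2 := Nat.mod_lt k (show 0 < Sb by omega)
        omega
      have hdmR : (k : ℝ) < (Sb : ℝ) * ((k / Sb : ℕ) : ℝ) + (Sb : ℝ) := by exact_mod_cast hdm
      rw [sub_le_iff_le_add, div_le_iff₀ hSbR]
      nlinarith
    have h1 : γ^((k / Sb : ℕ)) ≤ γ ^ ((k : ℝ)/(Sb : ℝ) - 1) := by
      rw [← Real.rpow_natCast γ (k / Sb)]
      exact Real.rpow_le_rpow_of_exponent_ge hγpos hγle1 hfloor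
    have h2 : γ ^ ((k : ℝ)/(Sb : ℝ) - 1) = r^k / γ := by
      rw [Real.rpow_sub hγpos, Real.rpow_one]
      congr 1
      rw [hrdef, ← Real.rpow_natCast (γ ^ ((Sb : ℝ))⁻¹) k, ← Real.rpow_mul hγpos.le]
      congr 1
      field_simp
    calc 2*M*γ^(k / Sb) ≤ 2*M*(γ ^ ((k : ℝ)/(Sb : ℝ) - 1)) := by
          exact mul_le_mul_of_nonneg_left h1 (by linarith)
      _ = C * r^k := by rw [h2, hCdef]; field_simp; try ring
  have hdistb : ∀ (x : ℝ) (n : ℕ), dist (a n x) (a (n+1) x) ≤ C * r^n := by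
    intro x n
    rw [Real.dist_eq, abs_sub_comm]
    exact (hstep n x).trans (hBr n)
  have hcauchy : ∀ x : ℝ, CauchySeq (fun k => a k x) := fun x =>
    cauchySeq_of_le_geometric r C hr1 (hdistb x)
  have hFex : ∀ x : ℝ, ∃ L, Filter.Tendsto (fun k => a k x) Filter.atTop (nhds L) :=
    fun x => cauchySeq_tendsto_of_complete (hcauchy x)
  set F : ℝ → ℝ := fun x => (hFex x).choose with hFdef
  have hFt : ∀ x, Filter.Tendsto (fun k => a k x) Filter.atTop (nhds (F x)) :=
    fun x => (hFex x).choose_spec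
  set E : ℕ → ℝ := fun n => C * r^n / (1 - r) with hEdef
  have htail : ∀ (x : ℝ) (n : ℕ), |a n x - F x| ≤ E n := by
    intro x n
    rw [← Real.dist_eq]
    exact dist_le_of_le_geometric_of_tendsto r C hr1 (hdistb x) (hFt x) n
  set G : ℕ → ℝ := fun n => 2 * E n + C * r^n with hGdef
  have hG0 : Filter.Tendsto G Filter.atTop (nhds 0) := by
    have hp : Filter.Tendsto (fun n : ℕ => r^n) Filter.atTop (nhds 0) :=
      tendsto_pow_atTop_nhds_zero_of_lt_one hrnn hr1
    have : Filter.Tendsto (fun n : ℕ => (2*C/(1-r) + C) * r^n) Filter.atTop (nhds 0) := by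
      simpa using hp.const_mul (2*C/(1-r) + C)
    refine this.congr fun n => ?_
    rw [hGdef, hEdef]
    field_simp
  have hE0 : Filter.Tendsto E Filter.atTop (nhds 0) := by
    have hp : Filter.Tendsto (fun n : ℕ => r^n) Filter.atTop (nhds 0) :=
      tendsto_pow_atTop_nhds_zero_of_lt_one hrnn hr1
    have : Filter.Tendsto (fun n : ℕ => (C/(1-r)) * r^n) Filter.atTop (nhds 0) := by
      simpa using hp.const_mul (C/(1-r))
    refine this.congr fun n => ?_
    rw [hEdef]
    ring
  have hEnn : ∀ n, 0 ≤ E n := fun n => le_trans (abs_nonneg _) (htail 0 n)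
  -- middle-term bound via floors
  have hmid : ∀ (k : ℕ) (u v : ℝ), |u - v| ≤ (1:ℝ)/2^k → |a k u - a k v| ≤ 2*M*γ^(k / Sb) := by
    intro k u v huv
    have h2k : (0:ℝ) < 2^k := by positivity
    have hscaled : |(2:ℝ)^k * u - (2:ℝ)^k * v| ≤ 1 := by
      rw [← mul_sub, abs_mul, abs_of_pos h2k]
      calc (2:ℝ)^k * |u - v| ≤ (2:ℝ)^k * ((1:ℝ)/2^k) :=
            mul_le_mul_of_nonneg_left huv h2k.le
        _ = 1 := by field_simp
    have hfl1 : ⌊(2:ℝ)^k * u⌋ ≤ ⌊(2:ℝ)^k * v⌋ + 1 := by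
      have : (2:ℝ)^k * u ≤ (2:ℝ)^k * v + 1 := by
        have := abs_le.mp hscaled; linarith [this.2]
      calc ⌊(2:ℝ)^k * u⌋ ≤ ⌊(2:ℝ)^k * v + 1⌋ := Int.floor_le_floor this
        _ = ⌊(2:ℝ)^k * v⌋ + 1 := by exact_mod_cast Int.floor_add_one _
    have hfl2 : ⌊(2:ℝ)^k * v⌋ ≤ ⌊(2:ℝ)^k * u⌋ + 1 := by
      have : (2:ℝ)^k * v ≤ (2:ℝ)^k * u + 1 := by
        have := abs_le.mp hscaled; linarith [this.1]
      calc ⌊(2:ℝ)^k * v⌋ ≤ ⌊(2:ℝ)^k * u + 1⌋ := Int.floor_le_floor this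
        _ = ⌊(2:ℝ)^k * u⌋ + 1 := by exact_mod_cast Int.floor_add_one _
    have hadj : (⌊(2:ℝ)^k * u⌋ - ⌊(2:ℝ)^k * v⌋).natAbs ≤ WL.WN lam := by omega
    exact hub k _ _ hadj
  refine ⟨F, ?_, ?_⟩
  · -- continuity
    rw [Metric.continuous_iff]
    intro x ε hε
    obtain ⟨k, hk⟩ := (hG0.eventually_lt_const hε).exists
    refine ⟨(1:ℝ)/2^k, by positivity, fun y hy => ?_⟩
    have h1 := htail y k
    have h2 := htail x k
    have h3 : |a k y - a k x| ≤ 2*M*γ^(k / Sb) := by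
      refine hmid k y x ?_
      rw [Real.dist_eq] at hy
      exact hy.le
    have h4 : 2*M*γ^(k / Sb) ≤ C * r^k := hBr k
    rw [Real.dist_eq]
    calc |F y - F x| = |(F y - a k y) + (a k y - a k x) + (a k x - F x)| := by ring_nf
      _ ≤ |F y - a k y| + |a k y - a k x| + |a k x - F x| := by
          refine le_trans (abs_add_le _ _) ?_
          gcongr
          exact abs_add_le _ _
      _ ≤ E k + (C * r^k) + E k := by
          rw [abs_sub_comm (F y)]
          gcongr
          exact le_trans h3 h4
      _ < ε := by rw [hGdef] at hk; simp at hk; linarith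
  · -- uniform convergence
    intro ε hε
    obtain ⟨K, hK⟩ := Filter.eventually_atTop.mp (hE0.eventually_lt_const hε)
    refine ⟨K, fun k hk j => ?_⟩
    have hfix : a k ((j : ℝ)/2^k) = A k j := by
      have h2k : (2:ℝ)^k * ((j:ℝ)/2^k) = (j:ℝ) := by field_simp
      show A k ⌊(2:ℝ)^k * ((j:ℝ)/2^k)⌋ = A k j
      rw [h2k, Int.floor_intCast]
    have := htail ((j : ℝ)/2^k) k
    rw [hfix] at this
    exact le_trans this (hK k hk).le
end

section
/- Let λ ∈ (1,+∞)∖ℕ and let the weight profile φ : [0,1] → (0,1] be one of: φ(x) = 1, φ(x) = 1−x (on its positivity domain extended positively), φ(x) = 1−x², φ(x) = (1−x²)², φ(x) = (1−x³)³, φ(x) = (1−x²)³, or φ(x) = e^{−ξx} with ξ > 0; set w_l = φ(|l|/λ) for |l| < λ. Then the scheme S_{1,w^λ} preserves monotonicity: for every bounded nondecreasing initial sequence f⁰ (f⁰_j ≤ f⁰_{j+1} for all j ∈ ℤ), the limit function S_{1,w^λ}^∞ f⁰ : ℝ → ℝ is nondecreasing. -/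
open scoped Classical

/-!
Every step of `S_{1,w^λ}` maps nondecreasing sequences to nondecreasing sequences; hence so does
every iterate, and monotonicity passes to the limit function through the dyadic points
`⌈2^k x⌉ / 2^k → x`.

For the one-step claim, `(S f)_m` and `(S f)_{m+1}` are averages of `f` with weights
`w_{2l-m}` and `w_{2l-m-1}`. If `φ` is positive, nonincreasing and log-concave on `[0, 1)`, the
weight sequence `t ↦ w_t` is log-concave on `ℤ` without internal zeros, so the ratio
`w_{2l-m-1} / w_{2l-m}` is nondecreasing in `l`; an average against a likelihood-ratio larger
weight is larger for nondecreasing `f`. The seven profiles are log-concave as powers of the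
concave functions `1 - x^n`, or as exponentials.
-/

open Set Filter Topology Finset

/-- Midpoint log-concavity is asked for only where the weights `w_l = φ(|l|/λ)` use `φ`. -/
structure IsLogConcaveProfile (φ : ℝ → ℝ) : Prop where
  pos : ∀ x ∈ Ico (0 : ℝ) 1, 0 < φ x
  antitoneOn : AntitoneOn φ (Ico 0 1)
  mul_le_sq : ∀ x h : ℝ, 0 ≤ h → 0 ≤ x - h → x + h < 1 → φ (x - h) * φ (x + h) ≤ φ x ^ 2

namespace IsLogConcaveProfile

variable {φ g : ℝ → ℝ}

theorem congr (hg : IsLogConcaveProfile g) (h : EqOn φ g (Ico 0 1)) :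
    IsLogConcaveProfile φ where
  pos x hx := h hx ▸ hg.pos x hx
  antitoneOn := hg.antitoneOn.congr h.symm
  mul_le_sq x t ht h₁ h₂ := by
    rw [h ⟨h₁, by linarith⟩, h ⟨by linarith, h₂⟩, h ⟨by linarith, by linarith⟩]
    exact hg.mul_le_sq x t ht h₁ h₂

theorem pow (hg : IsLogConcaveProfile g) (k : ℕ) : IsLogConcaveProfile fun x => g x ^ k where
  pos x hx := pow_pos (hg.pos x hx) k
  antitoneOn x hx y hy hxy := pow_le_pow_left₀ (hg.pos y hy).le (hg.antitoneOn hx hy hxy) k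
  mul_le_sq x t ht h₁ h₂ := by
    rw [← mul_pow, ← pow_mul, mul_comm k 2, pow_mul]
    exact pow_le_pow_left₀ (mul_nonneg (hg.pos _ ⟨h₁, by linarith⟩).le
      (hg.pos _ ⟨by linarith, h₂⟩).le) (hg.mul_le_sq x t ht h₁ h₂) k

theorem of_concaveOn (hpos : ∀ x ∈ Ico (0 : ℝ) 1, 0 < g x) (hanti : AntitoneOn g (Ico 0 1))
    (hconc : ConcaveOn ℝ (Ico 0 1) g) : IsLogConcaveProfile g where
  pos := hpos
  antitoneOn := hanti
  mul_le_sq x t _ h₁ h₂ := by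
    have hl : x - t ∈ Ico (0 : ℝ) 1 := ⟨h₁, by linarith⟩
    have hr : x + t ∈ Ico (0 : ℝ) 1 := ⟨by linarith, h₂⟩
    have hmid := hconc.2 hl hr (by norm_num : (0 : ℝ) ≤ 1 / 2) (by norm_num : (0 : ℝ) ≤ 1 / 2)
      (by norm_num)
    simp only [smul_eq_mul] at hmid
    rw [show 1 / 2 * (x - t) + 1 / 2 * (x + t) = x by ring] at hmid
    nlinarith [sq_nonneg (g (x - t) - g (x + t)), hpos _ hl, hpos _ hr]

theorem one_sub_pow {n : ℕ} (hn : n ≠ 0) : IsLogConcaveProfile fun x => 1 - x ^ n := by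
  refine of_concaveOn (fun x hx => sub_pos.2 (pow_lt_one₀ hx.1 hx.2 hn))
    (fun x hx y _ hxy => sub_le_sub_left (pow_le_pow_left₀ hx.1 hxy n) 1) ?_
  exact (concaveOn_const 1 (convex_Ico 0 1)).sub
    ((convexOn_pow n).subset Ico_subset_Ici_self (convex_Ico 0 1))

theorem one : IsLogConcaveProfile fun _ => 1 where
  pos _ _ := one_pos
  antitoneOn := antitoneOn_const
  mul_le_sq _ _ _ _ _ := by norm_num

theorem exp_neg_mul {ξ : ℝ} (hξ : 0 ≤ ξ) : IsLogConcaveProfile fun x => Real.exp (-ξ * x) where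
  pos _ _ := Real.exp_pos _
  antitoneOn _ _ _ _ hxy := Real.exp_le_exp.2 (by nlinarith)
  mul_le_sq x t _ _ _ := by
    rw [← Real.exp_add, sq, ← Real.exp_add]
    exact le_of_eq (congrArg _ (by ring))

end IsLogConcaveProfile

theorem mul_le_mul_of_logConcave {a : ℤ → ℝ} (h0 : ∀ n, 0 ≤ a n) (heven : Function.Even a)
    (hanti : AntitoneOn a (Ici 0)) (hlc : ∀ n, 0 < n → a (n - 1) * a (n + 1) ≤ a n ^ 2)
    {p q : ℤ} (hpq : p ≤ q) : a p * a (q + 1) ≤ a q * a (p + 1) := by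
  have hlc' : ∀ n, a (n - 1) * a (n + 1) ≤ a n ^ 2 := by
    intro n
    rcases lt_trichotomy n 0 with hn | rfl | hn
    · have := hlc (-n) (by omega)
      rwa [← heven n, ← heven (n - 1), ← heven (n + 1), show -(n - 1) = -n + 1 by ring,
        show -(n + 1) = -n - 1 by ring, mul_comm]
    · have h10 : a 1 ≤ a 0 := hanti (by simp) (by simp) zero_le_one
      rw [zero_sub, heven 1, zero_add]
      nlinarith [h0 1]
    · exact hlc n hn
  induction q, hpq using Int.leInduction with
  | base => rw [mul_comm]
  | succ q hpq ih =>
    have hlcq := hlc' (q + 1)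
    rw [add_sub_cancel_right] at hlcq
    rcases (h0 (q + 1)).eq_or_lt with hz | hpos
    · -- without internal zeros, `a (q + 1) = 0` kills one of `a p`, `a (q + 2)`
      rw [← hz, zero_mul]
      rcases le_or_gt 0 (q + 1) with hq | hq
      · have : a (q + 1 + 1) ≤ a (q + 1) := hanti hq (by simp; omega) (by omega)
        nlinarith [h0 p, h0 (q + 1 + 1)]
      · have : a (-p) ≤ a (-(q + 1)) := hanti (by simp; omega) (by simp; omega) (by omega)
        rw [heven, heven] at this
        nlinarith [h0 p, h0 (q + 1 + 1)]
    · refine le_of_mul_le_mul_right ?_ hpos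
      nlinarith [mul_le_mul_of_nonneg_right ih (h0 (q + 1 + 1)),
        mul_le_mul_of_nonneg_left hlcq (h0 (p + 1))]

/-- If `c / b` is nondecreasing, the `c`-weighted mean of a nondecreasing `f` dominates its
`b`-weighted mean; stated without division. -/
theorem sum_mul_sum_le_sum_mul_sum_of_monotone {ι : Type*} [LinearOrder ι] (s : Finset ι)
    {f b c : ι → ℝ} (hf : Monotone f) (hbc : ∀ i j, i ≤ j → c i * b j ≤ c j * b i) :
    (∑ i ∈ s, b i * f i) * ∑ i ∈ s, c i ≤ (∑ i ∈ s, c i * f i) * ∑ i ∈ s, b i := by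
  have key : 0 ≤ ∑ i ∈ s, ∑ j ∈ s, (c i * b j - b i * c j) * (f i - f j) :=
    sum_nonneg fun i _ => sum_nonneg fun j _ => by
      rcases le_total i j with h | h
      · exact mul_nonneg_of_nonpos_of_nonpos (by linarith [hbc i j h]) (sub_nonpos.2 (hf h))
      · exact mul_nonneg (by linarith [hbc j i h]) (sub_nonneg.2 (hf h))
  have expand : ∑ i ∈ s, ∑ j ∈ s, (c i * b j - b i * c j) * (f i - f j) =
      2 * ((∑ i ∈ s, c i * f i) * ∑ i ∈ s, b i - (∑ i ∈ s, b i * f i) * ∑ i ∈ s, c i) := by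
    have hterm : ∀ i j, (c i * b j - b i * c j) * (f i - f j) =
        c i * f i * b j + b i * (c j * f j) - (b i * f i * c j + c i * (b j * f j)) :=
      fun i j => by ring
    simp only [hterm, sum_sub_distrib, sum_add_distrib, ← mul_sum, ← sum_mul]
    ring
  linarith

/-- The weight `w_t = φ(|t|/λ)` of `S_{1,w^λ}`, extended by `0` for `|t| ≥ λ`. -/
noncomputable def wlprWeight (lam : ℝ) (φ : ℝ → ℝ) (t : ℤ) : ℝ :=
  if |(t : ℝ)| < lam then φ (|(t : ℝ)| / lam) else 0

section wlprWeight

variable {lam : ℝ} {φ : ℝ → ℝ}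

theorem abs_div_mem_Ico {x : ℝ} (h : |x| < lam) : |x| / lam ∈ Ico (0 : ℝ) 1 :=
  have hlam : 0 < lam := (abs_nonneg x).trans_lt h
  ⟨div_nonneg (abs_nonneg x) hlam.le, (div_lt_one hlam).2 h⟩

theorem wlprWeight_pos (hφ : IsLogConcaveProfile φ) {t : ℤ} (h : |(t : ℝ)| < lam) :
    0 < wlprWeight lam φ t := by
  rw [wlprWeight, if_pos h]
  exact hφ.pos _ (abs_div_mem_Ico h)

theorem wlprWeight_nonneg (hφ : IsLogConcaveProfile φ) (t : ℤ) : 0 ≤ wlprWeight lam φ t := by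
  by_cases h : |(t : ℝ)| < lam
  · exact (wlprWeight_pos hφ h).le
  · rw [wlprWeight, if_neg h]

theorem wlprWeight_even : Function.Even (wlprWeight lam φ) := fun t => by
  simp [wlprWeight]

theorem wlprWeight_antitoneOn (hφ : IsLogConcaveProfile φ) :
    AntitoneOn (wlprWeight lam φ) (Ici 0) := by
  intro s hs t ht hst
  have hst' : |(s : ℝ)| ≤ |(t : ℝ)| := abs_le_abs_of_nonneg (by exact_mod_cast hs)
    (by exact_mod_cast hst)
  by_cases h : |(t : ℝ)| < lam
  · have hs' := hst'.trans_lt h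
    have hlam : 0 < lam := (abs_nonneg _).trans_lt h
    rw [wlprWeight, wlprWeight, if_pos h, if_pos hs']
    exact hφ.antitoneOn (abs_div_mem_Ico hs') (abs_div_mem_Ico h)
      (div_le_div_of_nonneg_right hst' hlam.le)
  · rw [wlprWeight, if_neg h]
    exact wlprWeight_nonneg hφ s

theorem wlprWeight_mul_le_sq (hφ : IsLogConcaveProfile φ) {n : ℤ} (hn : 0 < n) :
    wlprWeight lam φ (n - 1) * wlprWeight lam φ (n + 1) ≤ wlprWeight lam φ n ^ 2 := by
  have hn' : (1 : ℝ) ≤ n := by exact_mod_cast hn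
  by_cases h : |((n + 1 : ℤ) : ℝ)| < lam
  · have hlam : 0 < lam := (abs_nonneg _).trans_lt h
    have hm : |((n - 1 : ℤ) : ℝ)| = n - 1 := by push_cast; exact abs_of_nonneg (by linarith)
    have h0 : |(n : ℝ)| = n := abs_of_nonneg (by linarith)
    have hp : |((n + 1 : ℤ) : ℝ)| = n + 1 := by push_cast; exact abs_of_nonneg (by linarith)
    rw [hp] at h
    simp only [wlprWeight, hm, h0, hp, if_pos h, if_pos (show (n : ℝ) < lam by linarith),
      if_pos (show (n : ℝ) - 1 < lam by linarith)]
    have := hφ.mul_le_sq (n / lam) (1 / lam) (by positivity)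
      (by rw [← sub_div]; exact div_nonneg (by linarith) hlam.le)
      (by rwa [← add_div, div_lt_one hlam])
    rwa [← sub_div, ← add_div] at this
  · have hzero : wlprWeight lam φ (n + 1) = 0 := if_neg h
    rw [hzero, mul_zero]
    positivity

theorem wlprWeight_mul_le_mul (hφ : IsLogConcaveProfile φ) {p q : ℤ} (hpq : p ≤ q) :
    wlprWeight lam φ p * wlprWeight lam φ (q + 1) ≤
      wlprWeight lam φ q * wlprWeight lam φ (p + 1) :=
  mul_le_mul_of_logConcave (wlprWeight_nonneg hφ) wlprWeight_even (wlprWeight_antitoneOn hφ)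
    (fun _ hn => wlprWeight_mul_le_sq hφ hn) hpq

end wlprWeight

section Swlpr

variable {lam : ℝ} {φ : ℝ → ℝ}

theorem Swlpr_eq_sum (f : ℤ → ℝ) (m : ℤ) {T : Finset ℤ}
    (hT : ∀ l : ℤ, |((2 * l - m : ℤ) : ℝ)| < lam → l ∈ T) :
    Swlpr lam (fun x => φ |x|) f m =
      (∑ l ∈ T, wlprWeight lam φ (2 * l - m) * f l) / ∑ l ∈ T, wlprWeight lam φ (2 * l - m) := by
  have hw : ∀ l : ℤ, (if |((2 * l - m : ℤ) : ℝ)| < lam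
      then φ |((2 * l - m : ℤ) : ℝ) / lam| else 0) = wlprWeight lam φ (2 * l - m) := by
    intro l
    unfold wlprWeight
    split_ifs with h
    · rw [abs_div, abs_of_pos ((abs_nonneg _).trans_lt h)]
    · rfl
  have hsupp : Function.support (fun l => wlprWeight lam φ (2 * l - m)) ⊆ T := by
    intro l hl
    by_contra hlT
    exact hl (if_neg fun h => hlT (hT l h))
  simp only [Swlpr, hw]
  rw [finsum_eq_sum_of_support_subset _ hsupp,
    finsum_eq_sum_of_support_subset _ ((Function.support_mul_subset_left _ _).trans hsupp)]

theorem sum_wlprWeight_pos (hφ : IsLogConcaveProfile φ) (hlam : 1 < lam) (m : ℤ)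
    {T : Finset ℤ} (hT : ∀ l : ℤ, |((2 * l - m : ℤ) : ℝ)| < lam → l ∈ T) :
    0 < ∑ l ∈ T, wlprWeight lam φ (2 * l - m) := by
  have hl : |((2 * ((m + 1) / 2) - m : ℤ) : ℝ)| < lam := by
    have : |2 * ((m + 1) / 2) - m| ≤ 1 := by rw [abs_le]; omega
    rw [← Int.cast_abs]
    exact lt_of_le_of_lt (by exact_mod_cast this) hlam
  exact sum_pos' (fun l _ => wlprWeight_nonneg hφ _) ⟨_, hT _ hl, wlprWeight_pos hφ hl⟩

theorem Swlpr_monotone (hφ : IsLogConcaveProfile φ) (hlam : 1 < lam) {f : ℤ → ℝ}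
    (hf : Monotone f) : Monotone (Swlpr lam (fun x => φ |x|) f) := by
  refine monotone_int_of_le_succ fun m => ?_
  set T := Finset.Icc (-(|m| + ⌈lam⌉)) (|m| + ⌈lam⌉ + 1)
  have hT : ∀ m', m' = m ∨ m' = m + 1 → ∀ l : ℤ, |((2 * l - m' : ℤ) : ℝ)| < lam → l ∈ T := by
    intro m' hm' l hl
    rw [← Int.cast_abs, ← Int.lt_ceil, abs_lt] at hl
    have := le_abs_self m
    have := neg_abs_le m
    rw [Finset.mem_Icc]
    omega
  rw [Swlpr_eq_sum f m (hT m (.inl rfl)), Swlpr_eq_sum f (m + 1) (hT (m + 1) (.inr rfl)),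
    div_le_div_iff₀ (sum_wlprWeight_pos hφ hlam m (hT m (.inl rfl)))
      (sum_wlprWeight_pos hφ hlam (m + 1) (hT (m + 1) (.inr rfl)))]
  refine sum_mul_sum_le_sum_mul_sum_of_monotone T hf fun s u hsu => ?_
  have := wlprWeight_mul_le_mul (lam := lam) hφ (p := 2 * s - (m + 1)) (q := 2 * u - (m + 1))
    (by omega)
  rwa [show 2 * s - (m + 1) + 1 = 2 * s - m by ring,
    show 2 * u - (m + 1) + 1 = 2 * u - m by ring] at this

end Swlpr

theorem ConvergesUniformlyTo.tendsto_sub {S : (ℤ → ℝ) → (ℤ → ℝ)} {f : ℤ → ℝ} {F : ℝ → ℝ}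
    (h : ConvergesUniformlyTo S f F) (j : ℕ → ℤ) :
    Tendsto (fun k => (S^[k] f) (j k) - F (j k / 2 ^ k)) atTop (𝓝 0) := by
  refine Metric.tendsto_atTop.2 fun ε hε => ?_
  obtain ⟨K, hK⟩ := h (ε / 2) (half_pos hε)
  refine ⟨K, fun k hk => ?_⟩
  rw [dist_zero_right, Real.norm_eq_abs]
  exact (hK k hk (j k)).trans_lt (half_lt_self hε)

theorem tendsto_ceil_two_pow_mul_div (x : ℝ) :
    Tendsto (fun k : ℕ => (⌈2 ^ k * x⌉ : ℝ) / 2 ^ k) atTop (𝓝 x) := by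
  have hupper : Tendsto (fun k : ℕ => x + (1 / 2) ^ k) atTop (𝓝 x) := by
    simpa using tendsto_const_nhds.add
      (tendsto_pow_atTop_nhds_zero_of_lt_one (by norm_num : (0 : ℝ) ≤ 1 / 2) (by norm_num))
  refine tendsto_of_tendsto_of_tendsto_of_le_of_le tendsto_const_nhds hupper (fun k => ?_)
    (fun k => ?_)
  · rw [le_div_iff₀ (by positivity), mul_comm]
    exact Int.le_ceil _
  · rw [div_le_iff₀ (by positivity), add_mul, one_div_pow, one_div_mul_cancel (by positivity),
      mul_comm]
    exact (Int.ceil_lt_add_one _).le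

theorem monotone_of_convergesUniformlyTo {S : (ℤ → ℝ) → (ℤ → ℝ)} {f : ℤ → ℝ} {F : ℝ → ℝ}
    (hF : Continuous F) (hmono : ∀ k, Monotone (S^[k] f)) (h : ConvergesUniformlyTo S f F) :
    Monotone F := by
  have hlim : ∀ x, Tendsto (fun k : ℕ => (S^[k] f) ⌈2 ^ k * x⌉) atTop (𝓝 (F x)) := fun x => by
    simpa using (h.tendsto_sub fun k => ⌈2 ^ k * x⌉).add
      ((hF.tendsto x).comp (tendsto_ceil_two_pow_mul_div x))
  intro x y hxy
  exact le_of_tendsto_of_tendsto' (hlim x) (hlim y) fun k => hmono k (Int.ceil_mono (by gcongr))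

theorem stmt14_general (lam : ℝ) (hlam : 1 < lam)
    (φ : ℝ → ℝ)
    (hφ : (∀ x : ℝ, φ x = 1) ∨
          (∀ x ∈ Set.Ico (0 : ℝ) 1, φ x = 1 - x) ∨
          (∀ x ∈ Set.Ico (0 : ℝ) 1, φ x = 1 - x ^ 2) ∨
          (∀ x ∈ Set.Ico (0 : ℝ) 1, φ x = (1 - x ^ 2) ^ 2) ∨
          (∀ x ∈ Set.Ico (0 : ℝ) 1, φ x = (1 - x ^ 3) ^ 3) ∨
          (∀ x ∈ Set.Ico (0 : ℝ) 1, φ x = (1 - x ^ 2) ^ 3) ∨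
          (∃ ξ : ℝ, 0 < ξ ∧ ∀ x ∈ Set.Ico (0 : ℝ) 1, φ x = Real.exp (-ξ * x))) :
    ∀ f : ℤ → ℝ, IsBoundedSeq f → Monotone f →
      ∀ F : ℝ → ℝ, Continuous F →
        ConvergesUniformlyTo (Swlpr lam (fun x => φ |x|)) f F →
        Monotone F := by
  have hprofile : IsLogConcaveProfile φ := by
    rcases hφ with h | h | h | h | h | h | ⟨ξ, hξ, h⟩
    · exact IsLogConcaveProfile.one.congr fun x _ => h x
    · exact (IsLogConcaveProfile.one_sub_pow one_ne_zero).congr fun x hx => by simp [h x hx]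
    · exact (IsLogConcaveProfile.one_sub_pow two_ne_zero).congr h
    · exact ((IsLogConcaveProfile.one_sub_pow two_ne_zero).pow 2).congr h
    · exact ((IsLogConcaveProfile.one_sub_pow three_ne_zero).pow 3).congr h
    · exact ((IsLogConcaveProfile.one_sub_pow two_ne_zero).pow 3).congr h
    · exact (IsLogConcaveProfile.exp_neg_mul hξ.le).congr h
  intro f _ hf F hF hconv
  exact monotone_of_convergesUniformlyTo hF
    (Function.Iterate.rec Monotone hf fun _ hg => Swlpr_monotone hprofile hlam hg) hconv

/-- for `λ ∈ (1,∞) ∖ ℕ` and weight profile `φ` one of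
`1`, `1−x`, `1−x²`, `(1−x²)²`, `(1−x³)³`, `(1−x²)³`, `e^{−ξx}` (with `ξ > 0`) on the
domain `[0,1)` of the used weights `w_l = φ(|l|/λ)`, the scheme `S_{1,w^λ}` preserves
monotonicity: for any bounded nondecreasing initial data `f⁰`, its limit function
`S_{1,w^λ}^∞ f⁰` is nondecreasing. -/
theorem stmt14 (lam : ℝ) (hlam : 1 < lam) (hlamnat : ∀ k : ℕ, lam ≠ (k : ℝ))
    (φ : ℝ → ℝ)
    (hφ : (∀ x : ℝ, φ x = 1) ∨
          (∀ x ∈ Set.Ico (0 : ℝ) 1, φ x = 1 - x) ∨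
          (∀ x ∈ Set.Ico (0 : ℝ) 1, φ x = 1 - x ^ 2) ∨
          (∀ x ∈ Set.Ico (0 : ℝ) 1, φ x = (1 - x ^ 2) ^ 2) ∨
          (∀ x ∈ Set.Ico (0 : ℝ) 1, φ x = (1 - x ^ 3) ^ 3) ∨
          (∀ x ∈ Set.Ico (0 : ℝ) 1, φ x = (1 - x ^ 2) ^ 3) ∨
          (∃ ξ : ℝ, 0 < ξ ∧ ∀ x ∈ Set.Ico (0 : ℝ) 1, φ x = Real.exp (-ξ * x))) :
    ∀ f : ℤ → ℝ, IsBoundedSeq f → Monotone f →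
      ∀ F : ℝ → ℝ, Continuous F →
        ConvergesUniformlyTo (Swlpr lam (fun x => φ |x|)) f F →
        Monotone F :=
  stmt14_general lam hlam φ hφ
end

section
/- Suppose each S_{a^n} reproduces Π₀. Let r : [−1,1] → ℝ be C¹ and set R(t) = ∫_{−1}^{t} r(s) ds. Assume there exist α > 2 and μ > 0 such that for all n and all j = 1−n,…,L_n, a^{n,0}_j − a^{n,1}_j = r(j/n)·n^{−2} + ε^n_j with |ε^n_j| ≤ μ·n^{−α}, and assume ‖R‖₁ := ∫_{−1}^{1} |R(t)| dt < 1. Then limsup_{n→∞} ∑_{j=1−n}^{L_n} |q^{n,0}_j| ≤ ‖R‖₁, and consequently there exists n₀ ∈ ℕ such that ∑_{j=1−n}^{L_n} |q^{n,0}_j| < 1 for all n > n₀. Moreover, if α = 3, one may take n₀ = [√((‖r‖_∞ + 2(μ+‖r′‖_∞))² + 4(‖R‖₁−1)(μ+‖r′‖_∞)) + ‖r‖_∞ + 2(μ+‖r′‖_∞)] / (2(1−‖R‖₁)) when L_n = n−1, and n₀ = [√((‖r‖_∞ + 2(μ+‖r′‖_∞))² + 4(1−‖R‖₁)μ) + ‖r‖_∞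 + 2(μ+‖r′‖_∞)] / (2(1−‖R‖₁)) when L_n = n, where ‖r‖_∞ = max_{t∈[−1,1]} |r(t)| and ‖r′‖_∞ = max_{t∈[−1,1]} |r′(t)|. -/
/-!
On the grid `x_k = -1 + k/n` the hypothesis says `a^{n,0}_j - a^{n,1}_j ≈ n⁻² r(x_{k+1})`
(with `j = k + 1 - n`), which is `n⁻¹` times the right-endpoint rule for `∫_{x_k}^{x_{k+1}} r`,
up to `O(n^{-α} + n⁻³)`. Summing, `q^{n,0}_j ≈ n⁻¹ R(x_{k+1})` with an error
`O(k (n^{-α} + n⁻³))`, and `n⁻¹ |R(x_{k+1})|` is in turn the right-endpoint rule for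
`∫_{x_k}^{x_{k+1}} |R|` up to `O(n⁻²)`, because `R` is `‖r‖_∞`-Lipschitz. Hence
`∑_j |q^{n,0}_j| ≤ ‖R‖₁ + O(n⁻¹ + n^{2-α})`; for `α = 3` the error term is explicit, and it
is below `1 - ‖R‖₁` as soon as `n` exceeds the positive root of the resulting quadratic.
-/

/-- `‖q^{n,0}‖₁ = ∑_{j=1−n}^{L_n} |q^{n,0}_j|`, where
`q^{n,0}_j = ∑_{l=1−n}^{j} (a^{n,0}_l − a^{n,1}_l)`. -/
noncomputable def qsum0 (a0 a1 : ℤ → ℝ) (nn Ln : ℤ) : ℝ :=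
  ∑ j ∈ Finset.Icc (1 - nn) Ln, |∑ l ∈ Finset.Icc (1 - nn) j, (a0 l - a1 l)|

open Filter Topology MeasureTheory intervalIntegral Finset
open scoped NNReal

theorem LipschitzOnWith.abs {f : ℝ → ℝ} {K : ℝ≥0} {s : Set ℝ}
    (hf : LipschitzOnWith K f s) : LipschitzOnWith K (fun x => |f x|) s := by
  simpa [Function.comp_def] using lipschitzWith_one_norm.comp_lipschitzOnWith hf

theorem lipschitzOnWith_primitive {r : ℝ → ℝ} {M : ℝ≥0} {a b : ℝ}
    (hr : IntervalIntegrable r volume a b) (hM : ∀ t ∈ Set.Icc a b, |r t| ≤ M) :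
    LipschitzOnWith M (fun t => ∫ s in a..t, r s) (Set.Icc a b) := by
  refine LipschitzOnWith.of_dist_le_mul fun x hx y hy => ?_
  have hI : ∀ t ∈ Set.Icc a b, IntervalIntegrable r volume a t := fun t ht =>
    hr.mono_set (Set.uIcc_subset_uIcc_left (Set.Icc_subset_uIcc ht))
  rw [Real.dist_eq, Real.dist_eq, integral_interval_sub_left (hI x hx) (hI y hy)]
  simpa only [Real.norm_eq_abs] using norm_integral_le_of_norm_le_const fun t ht =>
    (Real.norm_eq_abs (r t)).trans_le
      (hM t (Set.uIcc_subset_Icc hy hx (Set.uIoc_subset_uIcc ht)))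

theorem LipschitzOnWith.abs_mul_sub_integral_le {f : ℝ → ℝ} {K : ℝ≥0} {a b : ℝ}
    (hf : LipschitzOnWith K f (Set.Icc a b)) (hab : a ≤ b) :
    |(b - a) * f b - ∫ x in a..b, f x| ≤ K * (b - a) ^ 2 / 2 := by
  have hi : IntervalIntegrable f volume a b := hf.continuousOn.intervalIntegrable_of_Icc hab
  have hb : b ∈ Set.Icc a b := ⟨hab, le_rfl⟩
  calc |(b - a) * f b - ∫ x in a..b, f x| = |∫ x in a..b, (f b - f x)| := by
        rw [integral_sub intervalIntegrable_const hi, intervalIntegral.integral_const,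
          smul_eq_mul]
    _ ≤ ∫ x in a..b, |f b - f x| := abs_integral_le_integral_abs hab
    _ ≤ ∫ x in a..b, K * (b - x) := by
        refine integral_mono_on hab (intervalIntegrable_const.sub hi).abs
          ((by fun_prop : Continuous fun x : ℝ => K * (b - x)).intervalIntegrable _ _)
          fun x hx => ?_
        simpa only [Real.dist_eq, abs_of_nonneg (sub_nonneg.2 hx.2)]
          using hf.dist_le_mul b hb x hx
    _ = K * (b - a) ^ 2 / 2 := by
        simp [integral_comp_sub_left (fun x => x)]
        ring

theorem sum_range_natCast_add_one (m : ℕ) :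
    ∑ k ∈ range m, ((k : ℝ) + 1) = m * (m + 1) / 2 := by
  induction m with
  | zero => simp
  | succ m ih => rw [sum_range_succ, ih]; push_cast; ring

section UniformGrid

variable {r : ℝ → ℝ} {M K : ℝ≥0} {x₀ h ε : ℝ} {m : ℕ} {d : ℕ → ℝ}

theorem Icc_grid_cell_subset (hh : 0 ≤ h) {k : ℕ} (hk : k < m) :
    Set.Icc (x₀ + k * h) (x₀ + (k + 1) * h) ⊆ Set.Icc x₀ (x₀ + m * h) := by
  have hk' : (k : ℝ) + 1 ≤ m := by exact_mod_cast hk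
  exact Set.Icc_subset_Icc (by nlinarith [(Nat.cast_nonneg k : (0 : ℝ) ≤ k)]) (by nlinarith)

theorem sum_integral_grid {f : ℝ → ℝ} (hf : ContinuousOn f (Set.Icc x₀ (x₀ + m * h)))
    (hh : 0 ≤ h) {n : ℕ} (hn : n ≤ m) :
    ∑ k ∈ range n, ∫ s in x₀ + k * h..x₀ + (k + 1) * h, f s
      = ∫ s in x₀..x₀ + n * h, f s := by
  have hint : ∀ k < n, IntervalIntegrable f volume (x₀ + k * h) (x₀ + (k + 1 : ℕ) * h) :=
    fun k hk => by
      push_cast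
      exact (hf.mono (Icc_grid_cell_subset hh (by omega))).intervalIntegrable_of_Icc
        (by nlinarith)
  simpa using sum_integral_adjacent_intervals hint

theorem abs_sub_mul_integral_cell_le (hr : LipschitzOnWith K r (Set.Icc x₀ (x₀ + m * h)))
    (hh : 0 ≤ h) (hd : ∀ k < m, |d k - h ^ 2 * r (x₀ + (k + 1) * h)| ≤ ε)
    {k : ℕ} (hk : k < m) :
    |d k - h * ∫ s in x₀ + k * h..x₀ + (k + 1) * h, r s| ≤ ε + K * h ^ 3 / 2 := by
  set b := x₀ + (k + 1) * h
  set I := ∫ s in x₀ + k * h..b, r s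
  have hcell := (hr.mono (Icc_grid_cell_subset hh hk)).abs_mul_sub_integral_le
    (by nlinarith : x₀ + k * h ≤ b)
  rw [show b - (x₀ + k * h) = h by ring] at hcell
  calc |d k - h * I| = |(d k - h ^ 2 * r b) + h * (h * r b - I)| := by ring_nf
    _ ≤ |d k - h ^ 2 * r b| + h * |h * r b - I| := by
        rw [← abs_of_nonneg hh, ← abs_mul, abs_of_nonneg hh]; exact abs_add_le _ _
    _ ≤ ε + h * (K * h ^ 2 / 2) := by gcongr; exact hd k hk
    _ = ε + K * h ^ 3 / 2 := by ring

theorem abs_partialSum_sub_mul_primitive_le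
    (hr : LipschitzOnWith K r (Set.Icc x₀ (x₀ + m * h)))
    (hh : 0 ≤ h) (hd : ∀ k < m, |d k - h ^ 2 * r (x₀ + (k + 1) * h)| ≤ ε)
    {k : ℕ} (hk : k < m) :
    |∑ i ∈ range (k + 1), d i - h * ∫ s in x₀..x₀ + (k + 1) * h, r s|
      ≤ (k + 1) * (ε + K * h ^ 3 / 2) := by
  have hsplit := sum_integral_grid hr.continuousOn hh (Nat.succ_le_of_lt hk)
  push_cast at hsplit
  rw [← hsplit, mul_sum, ← sum_sub_distrib]
  calc _ ≤ ∑ i ∈ range (k + 1), |d i - h * ∫ s in x₀ + i * h..x₀ + (i + 1) * h, r s| :=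
        abs_sum_le_sum_abs _ _
    _ ≤ ∑ i ∈ range (k + 1), (ε + K * h ^ 3 / 2) :=
        sum_le_sum fun i hi => abs_sub_mul_integral_cell_le hr hh hd (by simp at hi; omega)
    _ = (k + 1) * (ε + K * h ^ 3 / 2) := by simp [mul_add]

theorem mul_abs_primitive_le (hr : ContinuousOn r (Set.Icc x₀ (x₀ + m * h)))
    (hM : ∀ t ∈ Set.Icc x₀ (x₀ + m * h), |r t| ≤ M) (hh : 0 ≤ h)
    {k : ℕ} (hk : k < m) :
    h * |∫ s in x₀..x₀ + (k + 1) * h, r s|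
      ≤ (∫ t in x₀ + k * h..x₀ + (k + 1) * h, |∫ s in x₀..t, r s|) + M * h ^ 2 / 2 := by
  have hR := (lipschitzOnWith_primitive
    (hr.intervalIntegrable_of_Icc (le_add_of_nonneg_right (by positivity))) hM).abs
  have hcell := (hR.mono (Icc_grid_cell_subset hh hk)).abs_mul_sub_integral_le
    (by nlinarith : x₀ + k * h ≤ x₀ + (k + 1) * h)
  rw [show x₀ + (k + 1) * h - (x₀ + k * h) = h by ring] at hcell
  linarith [(abs_le.1 hcell).2]

theorem sum_abs_partialSum_le (hr : LipschitzOnWith K r (Set.Icc x₀ (x₀ + m * h)))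
    (hM : ∀ t ∈ Set.Icc x₀ (x₀ + m * h), |r t| ≤ M) (hh : 0 ≤ h)
    (hd : ∀ k < m, |d k - h ^ 2 * r (x₀ + (k + 1) * h)| ≤ ε) :
    ∑ k ∈ range m, |∑ i ∈ range (k + 1), d i|
      ≤ (∫ t in x₀..x₀ + m * h, |∫ s in x₀..t, r s|) + m * (M * h ^ 2 / 2)
        + m * (m + 1) / 2 * (ε + K * h ^ 3 / 2) := by
  have hterm : ∀ k ∈ range m, |∑ i ∈ range (k + 1), d i|
      ≤ (∫ t in x₀ + k * h..x₀ + (k + 1) * h, |∫ s in x₀..t, r s|) + M * h ^ 2 / 2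
        + (k + 1) * (ε + K * h ^ 3 / 2) := fun k hk => by
    have hk := mem_range.1 hk
    have := abs_partialSum_sub_mul_primitive_le hr hh hd hk
    have := mul_abs_primitive_le hr.continuousOn hM hh hk
    have := abs_sub_abs_le_abs_sub (∑ i ∈ range (k + 1), d i)
      (h * ∫ s in x₀..x₀ + (k + 1) * h, r s)
    rw [abs_mul, abs_of_nonneg hh] at this
    linarith
  have hRc : ContinuousOn (fun t => |∫ s in x₀..t, r s|) (Set.Icc x₀ (x₀ + m * h)) :=
    (lipschitzOnWith_primitive (hr.continuousOn.intervalIntegrable_of_Icc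
      (le_add_of_nonneg_right (by positivity))) hM).abs.continuousOn
  refine (sum_le_sum hterm).trans (le_of_eq ?_)
  rw [sum_add_distrib, sum_add_distrib, sum_integral_grid hRc hh le_rfl, ← sum_mul,
    sum_range_natCast_add_one]
  simp

end UniformGrid

theorem Int.sum_Icc_add_sub_one_eq_sum_range {M : Type*} [AddCommMonoid M] (f : ℤ → M) (a : ℤ)
    (n : ℕ) : ∑ j ∈ Finset.Icc a (a + n - 1), f j = ∑ k ∈ Finset.range n, f (a + k) := by
  rw [Int.Icc_eq_finset_map, sum_map, show (a + n - 1 + 1 - a).toNat = n by omega]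
  rfl

theorem qsum0_eq_sum_range (a0 a1 : ℤ → ℝ) (N : ℤ) (m : ℕ) :
    qsum0 a0 a1 N (m - N) =
      ∑ k ∈ range m, |∑ i ∈ range (k + 1), (a0 (1 - N + i) - a1 (1 - N + i))| := by
  rw [qsum0, show m - N = 1 - N + m - 1 by ring, Int.sum_Icc_add_sub_one_eq_sum_range]
  refine sum_congr rfl fun k _ => ?_
  rw [show 1 - N + k = 1 - N + (k + 1 : ℕ) - 1 by push_cast; ring,
    Int.sum_Icc_add_sub_one_eq_sum_range]

theorem grid_error_le {M K ε x m : ℝ} (hM : 0 ≤ M) (hK : 0 ≤ K) (hε : 0 ≤ ε)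
    (hx : 1 ≤ x) (hm : 0 ≤ m) (hmx : m ≤ 2 * x) :
    m * (M * (1 / x) ^ 2 / 2) + m * (m + 1) / 2 * (ε + K * (1 / x) ^ 3 / 2)
      ≤ (M + 2 * K) / x + 3 * (x ^ 2 * ε) := by
  have hx0 : 0 < x := by linarith
  have hM' : m * (M * (1 / x) ^ 2 / 2) ≤ M / x := by
    rw [show M / x = 2 * x * (M * (1 / x) ^ 2 / 2) by field_simp]
    gcongr
  have hmm : m * (m + 1) / 2 ≤ 3 * x ^ 2 := by nlinarith
  have hK' : 3 * x ^ 2 * (K * (1 / x) ^ 3 / 2) ≤ 2 * K / x := by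
    rw [show 3 * x ^ 2 * (K * (1 / x) ^ 3 / 2) = 3 / 4 * (2 * K / x) by field_simp; ring]
    have : 0 ≤ 2 * K / x := by positivity
    linarith
  calc _ ≤ M / x + 3 * x ^ 2 * (ε + K * (1 / x) ^ 3 / 2) := by gcongr
    _ ≤ (M + 2 * K) / x + 3 * (x ^ 2 * ε) := by rw [add_div]; linarith

theorem qsum0_le_of_approx {r : ℝ → ℝ} {M K : ℝ≥0}
    (hr : LipschitzOnWith K r (Set.Icc (-1) 1)) (hM : ∀ t ∈ Set.Icc (-1 : ℝ) 1, |r t| ≤ M)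
    {a0 a1 : ℤ → ℝ} {n : ℕ} (hn : 1 ≤ n) {Ln : ℤ} (hLn : 0 ≤ Ln + n) (hLn' : Ln ≤ n)
    {ε : ℝ}
    (herr : ∀ j : ℤ, 1 - (n : ℤ) ≤ j → j ≤ Ln →
      |a0 j - a1 j - r (j / n) / (n : ℝ) ^ 2| ≤ ε) :
    qsum0 a0 a1 n Ln ≤ (∫ t in (-1 : ℝ)..1, |∫ s in (-1 : ℝ)..t, r s|)
      + (Ln + n) * (M * (1 / n) ^ 2 / 2)
      + (Ln + n) * (Ln + n + 1) / 2 * (ε + K * (1 / n) ^ 3 / 2) := by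
  obtain ⟨m, hm⟩ := Int.eq_ofNat_of_zero_le hLn
  obtain rfl : Ln = m - n := by omega
  have hn0 : (0 : ℝ) < n := by exact_mod_cast hn
  have hmn : (-1 : ℝ) + m * (1 / n) ≤ 1 := by
    have : (m : ℝ) ≤ 2 * n := by exact_mod_cast (by omega : (m : ℤ) ≤ 2 * n)
    have : (m : ℝ) * (1 / n) ≤ 2 := by rw [mul_one_div, div_le_iff₀ hn0]; linarith
    linarith
  have hsub : Set.Icc (-1 : ℝ) (-1 + m * (1 / n)) ⊆ Set.Icc (-1) 1 :=
    Set.Icc_subset_Icc_right hmn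
  have hd : ∀ k < m,
      |a0 (1 - n + k) - a1 (1 - n + k) - (1 / n) ^ 2 * r (-1 + (k + 1) * (1 / n))| ≤ ε :=
    fun k hk => by
      convert herr (1 - n + k) (by omega) (by omega) using 3
      rw [div_eq_mul_one_div (r _), mul_comm, one_div_pow]
      congr 1
      push_cast
      field_simp
      ring_nf
  have hRc : ContinuousOn (fun t => |∫ s in (-1 : ℝ)..t, r s|) (Set.Icc (-1) 1) :=
    (lipschitzOnWith_primitive (hr.continuousOn.intervalIntegrable_of_Icc (by norm_num))
      hM).abs.continuousOn
  rw [qsum0_eq_sum_range]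
  push_cast
  rw [sub_add_cancel]
  refine (sum_abs_partialSum_le (hr.mono hsub) (fun t ht => hM t (hsub ht))
    (by positivity) hd).trans ?_
  gcongr
  exact integral_mono_interval le_rfl (le_add_of_nonneg_right (by positivity)) hmn
    (Eventually.of_forall fun _ => abs_nonneg _) (hRc.intervalIntegrable_of_Icc (by norm_num))

theorem qsum0_le_add_of_approx {r : ℝ → ℝ} {M K : ℝ≥0}
    (hr : LipschitzOnWith K r (Set.Icc (-1) 1)) (hM : ∀ t ∈ Set.Icc (-1 : ℝ) 1, |r t| ≤ M)
    {a0 a1 : ℤ → ℝ} {n : ℕ} (hn : 1 ≤ n) {Ln : ℤ} (hLn : 0 ≤ Ln + n) (hLn' : Ln ≤ n)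
    {μ α : ℝ} (hμ : 0 ≤ μ)
    (herr : ∀ j : ℤ, 1 - (n : ℤ) ≤ j → j ≤ Ln →
      |a0 j - a1 j - r (j / n) / (n : ℝ) ^ 2| ≤ μ / (n : ℝ) ^ α) :
    qsum0 a0 a1 n Ln ≤ (∫ t in (-1 : ℝ)..1, |∫ s in (-1 : ℝ)..t, r s|)
      + ((M + 2 * K) / n + 3 * ((n : ℝ) ^ 2 * (μ / (n : ℝ) ^ α))) := by
  have hm : (0 : ℝ) ≤ Ln + n := by exact_mod_cast hLn
  have hmx : (Ln : ℝ) + n ≤ 2 * n := by linarith [(by exact_mod_cast hLn' : (Ln : ℝ) ≤ n)]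
  linarith [qsum0_le_of_approx hr hM hn hLn hLn' herr, grid_error_le (ε := μ / (n : ℝ) ^ α)
    M.coe_nonneg K.coe_nonneg (by positivity) (by exact_mod_cast hn : (1 : ℝ) ≤ n) hm hmx]

theorem le_ciSup_of_continuousOn {X : Type*} [TopologicalSpace X] {s : Set X} (hs : IsCompact s)
    {f : X → ℝ} (hf : ContinuousOn f s) {t : X} (ht : t ∈ s) : f t ≤ ⨆ x : s, f x :=
  le_ciSup (by simpa [Set.image_eq_range] using (hs.image_of_continuousOn hf).bddAbove)
    (⟨t, ht⟩ : s)

theorem tendsto_sq_mul_div_rpow_atTop {α : ℝ} (hα : 2 < α) (μ : ℝ) :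
    Tendsto (fun n : ℕ => (n : ℝ) ^ 2 * (μ / (n : ℝ) ^ α)) atTop (𝓝 0) := by
  have h := ((tendsto_rpow_neg_atTop (by linarith : 0 < α - 2)).comp
    tendsto_natCast_atTop_atTop).const_mul μ
  rw [mul_zero] at h
  refine h.congr' ((eventually_gt_atTop 0).mono fun n hn => ?_)
  have hn : (0 : ℝ) < n := by exact_mod_cast hn
  simp only [Function.comp_apply, Real.rpow_neg hn.le, Real.rpow_sub hn, Real.rpow_two]
  field_simp

theorem limsup_le_of_le_add_of_tendsto_zero {u g : ℕ → ℝ} {c : ℝ} (hu : ∀ n, 0 ≤ u n)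
    (hg : Tendsto g atTop (𝓝 0)) (h : ∀ᶠ n in atTop, u n ≤ c + g n) :
    limsup u atTop ≤ c := by
  have hcg : Tendsto (fun n => c + g n) atTop (𝓝 c) := by simpa using hg.const_add c
  calc limsup u atTop ≤ limsup (fun n => c + g n) atTop :=
        limsup_le_limsup h (isBoundedUnder_of_eventually_ge (.of_forall hu)).isCoboundedUnder_le
          hcg.isBoundedUnder_le
    _ = c := hcg.limsup_eq

theorem add_lt_sq_of_sqrt_add_div_lt {s B c x : ℝ} (hs : 0 < s)
    (hx : (√(B ^ 2 + 4 * s * c) + B) / (2 * s) < x) : B * x + c < s * x ^ 2 := by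
  rw [div_lt_iff₀ (by positivity)] at hx
  have hD : B ^ 2 + 4 * s * c ≤ √(B ^ 2 + 4 * s * c) ^ 2 :=
    (le_max_left _ _).trans_eq Real.sq_sqrt'.symm
  have h0 := Real.sqrt_nonneg (B ^ 2 + 4 * s * c)
  nlinarith [mul_pos (by linarith : 0 < x * (2 * s) - B - √(B ^ 2 + 4 * s * c))
    (by linarith : 0 < x * (2 * s) - B + √(B ^ 2 + 4 * s * c))]

theorem grid_bound_lt_one_of_eq_two_mul_sub_one {R1 M K μ x m : ℝ} (hM : 0 ≤ M) (hK : 0 ≤ K)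
    (hx : 1 ≤ x) (hm : m = 2 * x - 1)
    (hq : (M + 2 * (μ + K)) * x + -(μ + K) < (1 - R1) * x ^ 2) :
    R1 + m * (M * (1 / x) ^ 2 / 2) + m * (m + 1) / 2 * (μ / x ^ 3 + K * (1 / x) ^ 3 / 2) < 1 := by
  have hx0 : 0 < x := by linarith
  have e : m * (M * (1 / x) ^ 2 / 2) + m * (m + 1) / 2 * (μ / x ^ 3 + K * (1 / x) ^ 3 / 2)
      = (2 * x - 1) * (M + 2 * μ + K) / (2 * x ^ 2) := by subst hm; field_simp; ring
  rw [add_assoc, e, ← lt_sub_iff_add_lt', div_lt_iff₀ (by positivity)]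
  nlinarith

theorem grid_bound_lt_one_of_eq_two_mul {R1 M K μ x m : ℝ} (hK : 0 ≤ K) (hx : 1 ≤ x)
    (hm : m = 2 * x) (hq : (M + 2 * (μ + K)) * x + μ < (1 - R1) * x ^ 2) :
    R1 + m * (M * (1 / x) ^ 2 / 2) + m * (m + 1) / 2 * (μ / x ^ 3 + K * (1 / x) ^ 3 / 2) < 1 := by
  have hx0 : 0 < x := by linarith
  have e : m * (M * (1 / x) ^ 2 / 2) + m * (m + 1) / 2 * (μ / x ^ 3 + K * (1 / x) ^ 3 / 2)
      = (2 * x * M + (2 * x + 1) * (2 * μ + K)) / (2 * x ^ 2) := by subst hm; field_simp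
  rw [add_assoc, e, ← lt_sub_iff_add_lt', div_lt_iff₀ (by positivity)]
  nlinarith

theorem stmt15_general
    (a0 a1 : ℕ → ℤ → ℝ) (L : ℕ → ℤ)
    (hL : (∀ n : ℕ, L n = (n : ℤ) - 1) ∨ (∀ n : ℕ, L n = (n : ℤ)))
    (r r' : ℝ → ℝ)
    (hr' : ∀ t ∈ Set.Icc (-1 : ℝ) 1, HasDerivWithinAt r (r' t) (Set.Icc (-1 : ℝ) 1) t)
    (hr'c : ContinuousOn r' (Set.Icc (-1 : ℝ) 1))
    (α μ : ℝ) (hα : 2 < α) (hμ : 0 < μ)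
    (herr : ∀ n : ℕ, 1 ≤ n → ∀ j : ℤ, 1 - (n : ℤ) ≤ j → j ≤ L n →
      |a0 n j - a1 n j - r ((j : ℝ) / n) / (n : ℝ) ^ 2| ≤ μ / (n : ℝ) ^ α)
    (R1 : ℝ) (hR1 : R1 = ∫ t in (-1 : ℝ)..1, |∫ s in (-1 : ℝ)..t, r s|)
    (hRlt : R1 < 1)
    (Mr Mr' : ℝ)
    (hMr : Mr = ⨆ t : Set.Icc (-1 : ℝ) 1, |r (t : ℝ)|)
    (hMr' : Mr' = ⨆ t : Set.Icc (-1 : ℝ) 1, |r' (t : ℝ)|) :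
    (Filter.limsup (fun n : ℕ => qsum0 (a0 n) (a1 n) n (L n)) Filter.atTop ≤ R1) ∧
    (∃ n₀ : ℕ, ∀ n : ℕ, n₀ < n → qsum0 (a0 n) (a1 n) n (L n) < 1) ∧
    (α = 3 →
      ((∀ n : ℕ, L n = (n : ℤ) - 1) →
        ∀ n : ℕ,
          (Real.sqrt ((Mr + 2 * (μ + Mr')) ^ 2 + 4 * (R1 - 1) * (μ + Mr'))
              + Mr + 2 * (μ + Mr')) / (2 * (1 - R1)) < (n : ℝ) →
          qsum0 (a0 n) (a1 n) n (L n) < 1) ∧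
      ((∀ n : ℕ, L n = (n : ℤ)) →
        ∀ n : ℕ,
          (Real.sqrt ((Mr + 2 * (μ + Mr')) ^ 2 + 4 * (1 - R1) * μ)
              + Mr + 2 * (μ + Mr')) / (2 * (1 - R1)) < (n : ℝ) →
          qsum0 (a0 n) (a1 n) n (L n) < 1)) := by
  have hrc : ContinuousOn r (Set.Icc (-1) 1) := fun t ht => (hr' t ht).continuousWithinAt
  have hMb : ∀ t ∈ Set.Icc (-1 : ℝ) 1, |r t| ≤ Mr := fun t ht =>
    hMr ▸ le_ciSup_of_continuousOn isCompact_Icc hrc.abs ht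
  have hM'b : ∀ t ∈ Set.Icc (-1 : ℝ) 1, |r' t| ≤ Mr' := fun t ht =>
    hMr' ▸ le_ciSup_of_continuousOn isCompact_Icc hr'c.abs ht
  lift Mr to ℝ≥0 using (abs_nonneg _).trans (hMb 0 (by norm_num))
  lift Mr' to ℝ≥0 using (abs_nonneg _).trans (hM'b 0 (by norm_num))
  have hlip : LipschitzOnWith Mr' r (Set.Icc (-1) 1) :=
    (convex_Icc _ _).lipschitzOnWith_of_nnnorm_hasDerivWithin_le hr' fun t ht => by
      rw [← NNReal.coe_le_coe, coe_nnnorm, Real.norm_eq_abs]; exact hM'b t ht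
  have hLn : ∀ n : ℕ, 1 ≤ n → 0 ≤ L n + n ∧ L n ≤ n := by
    rcases hL with h | h <;> intro n hn <;> simp only [h n] <;> omega
  have key := fun n (hn : 1 ≤ n) =>
    qsum0_le_of_approx hlip hMb hn (hLn n hn).1 (hLn n hn).2 (herr n hn)
  have hbound := fun n (hn : 1 ≤ n) =>
    qsum0_le_add_of_approx hlip hMb hn (hLn n hn).1 (hLn n hn).2 hμ.le (herr n hn)
  simp only [← hR1] at key hbound
  have hg : Tendsto
      (fun n : ℕ => (Mr + 2 * Mr' : ℝ) / n + 3 * ((n : ℝ) ^ 2 * (μ / (n : ℝ) ^ α)))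
      atTop (𝓝 0) := by
    simpa using (tendsto_const_div_atTop_nhds_zero_nat _).add
      ((tendsto_sq_mul_div_rpow_atTop hα μ).const_mul 3)
  have hev := eventually_atTop.2 ⟨1, hbound⟩
  refine ⟨limsup_le_of_le_add_of_tendsto_zero (fun n => sum_nonneg fun _ _ => abs_nonneg _)
    hg hev, ?_, fun h3 => ⟨fun hL' n hn => ?_, fun hL' n hn => ?_⟩⟩
  · obtain ⟨N, hN⟩ := eventually_atTop.1 (hev.and (hg.eventually_lt_const (sub_pos.2 hRlt)))
    exact ⟨N, fun n hn => (hN n hn.le).1.trans_lt (by linarith [(hN n hn.le).2])⟩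
  all_goals
    have hn1 : 1 ≤ n := Nat.cast_pos.1 ((div_nonneg (by positivity) (by linarith)).trans_lt hn)
    refine (key n hn1).trans_lt ?_
    rw [hL' n, h3, Real.rpow_ofNat]
    push_cast
  · exact grid_bound_lt_one_of_eq_two_mul_sub_one Mr.coe_nonneg Mr'.coe_nonneg
      (by exact_mod_cast hn1) (by ring)
      (add_lt_sq_of_sqrt_add_div_lt (by linarith) (by convert hn using 2; ring_nf))
  · exact grid_bound_lt_one_of_eq_two_mul Mr'.coe_nonneg (by exact_mod_cast hn1) (by ring)
      (add_lt_sq_of_sqrt_add_div_lt (by linarith) (by convert hn using 2; ring))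

/-- for a family of subdivision schemes `S_{a^n}` reproducing `Π₀`
(with `L_n = n−1` for all `n`, or `L_n = n` for all `n`), a `C¹` function
`r : [−1,1] → ℝ` with `R(t) = ∫_{−1}^t r`, if
`a^{n,0}_j − a^{n,1}_j = r(j/n) n^{−2} + ε^n_j` with `|ε^n_j| ≤ μ n^{−α}` (`α > 2`,
`μ > 0`) and `‖R‖₁ = ∫_{−1}^1 |R| < 1`, then
`limsup_n ∑_j |q^{n,0}_j| ≤ ‖R‖₁`, hence `∑_j |q^{n,0}_j| < 1` for all `n` beyond some
`n₀`; moreover if `α = 3` one may take `n₀` equal to the explicit formula (depending on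
whether `L_n = n−1` or `L_n = n`), with `‖r‖_∞ = max_{[−1,1]} |r|`,
`‖r'‖_∞ = max_{[−1,1]} |r'|`. -/
theorem stmt15
    (a0 a1 : ℕ → ℤ → ℝ) (L : ℕ → ℤ)
    (hL : (∀ n : ℕ, L n = (n : ℤ) - 1) ∨ (∀ n : ℕ, L n = (n : ℤ)))
    (hrep : ∀ n : ℕ, 1 ≤ n →
      (∑ l ∈ Finset.Icc (1 - (n : ℤ)) (L n), a0 n l) = 1 ∧
      (∑ l ∈ Finset.Icc (1 - (n : ℤ)) (L n + 1), a1 n l) = 1)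
    (r r' : ℝ → ℝ)
    (hr' : ∀ t ∈ Set.Icc (-1 : ℝ) 1, HasDerivWithinAt r (r' t) (Set.Icc (-1 : ℝ) 1) t)
    (hr'c : ContinuousOn r' (Set.Icc (-1 : ℝ) 1))
    (α μ : ℝ) (hα : 2 < α) (hμ : 0 < μ)
    (herr : ∀ n : ℕ, 1 ≤ n → ∀ j : ℤ, 1 - (n : ℤ) ≤ j → j ≤ L n →
      |a0 n j - a1 n j - r ((j : ℝ) / n) / (n : ℝ) ^ 2| ≤ μ / (n : ℝ) ^ α)
    (R1 : ℝ) (hR1 : R1 = ∫ t in (-1 : ℝ)..1, |∫ s in (-1 : ℝ)..t, r s|)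
    (hRlt : R1 < 1)
    (Mr Mr' : ℝ)
    (hMr : Mr = ⨆ t : Set.Icc (-1 : ℝ) 1, |r (t : ℝ)|)
    (hMr' : Mr' = ⨆ t : Set.Icc (-1 : ℝ) 1, |r' (t : ℝ)|) :
    (Filter.limsup (fun n : ℕ => qsum0 (a0 n) (a1 n) n (L n)) Filter.atTop ≤ R1) ∧
    (∃ n₀ : ℕ, ∀ n : ℕ, n₀ < n → qsum0 (a0 n) (a1 n) n (L n) < 1) ∧
    (α = 3 →
      ((∀ n : ℕ, L n = (n : ℤ) - 1) →
        ∀ n : ℕ,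
          (Real.sqrt ((Mr + 2 * (μ + Mr')) ^ 2 + 4 * (R1 - 1) * (μ + Mr'))
              + Mr + 2 * (μ + Mr')) / (2 * (1 - R1)) < (n : ℝ) →
          qsum0 (a0 n) (a1 n) n (L n) < 1) ∧
      ((∀ n : ℕ, L n = (n : ℤ)) →
        ∀ n : ℕ,
          (Real.sqrt ((Mr + 2 * (μ + Mr')) ^ 2 + 4 * (1 - R1) * μ)
              + Mr + 2 * (μ + Mr')) / (2 * (1 - R1)) < (n : ℝ) →
          qsum0 (a0 n) (a1 n) n (L n) < 1)) :=
  stmt15_general a0 a1 L hL r r' hr' hr'c α μ hα hμ herr R1 hR1 hRlt Mr Mr' hMr hMr'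
end
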